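/- arXiv:2403.00715 — 9 statements merged into one kernel-verified Lean document; each statement's English description precedes it below -/
import Mathlib

section
/- Let z_1,...,z_T ≥ 0 and h_1,...,h_T > 0, and let G(z,h) = Σ_{t=1}^T z_t·(Σ_{s=1}^t z_s/h_s)^{-1/2}. Let θ_0 > θ_1 > ... > θ_J > 0 be a decreasing positive sequence with θ_0 ≥ max_t h_t. Define T_j = {t ∈ [T] : θ_{j-1} ≥ h_t > θ_j} for j ∈ [J] and T_{J+1} = {t ∈ [T] : θ_J ≥ h_t}. Then G(z,h) ≤ 2·Σ_{j=1}^{J+1} sqrt( θ_{j-1}·Σ_{t ∈ T_j} z_t ). -/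
/-!
For nonnegative `f`, telescoping `b / √(b + F) ≤ 2 (√(b + F) - √F)` gives
`∑ₜ fₜ / √(∑_{u ≤ t} f_u) ≤ 2 √(∑ f)`. On a level set `T_j` every `h_t ≤ θ_{j-1}`, so the prefix
sum `∑_{s ≤ t} z_s / h_s` is at least `θ_{j-1}⁻¹` times the prefix sum of `z` over `T_j`, and the
telescoping bound yields `2 √(θ_{j-1} ∑_{T_j} z)` for the part of `G` coming from `T_j`. Since
`h_t ≤ θ_0`, the level sets cover `[T]`, and summing over them bounds `G`.
-/

open Finset

theorem Finset.sum_le_sum_sum_filter_of_forall_exists {α β M : Type*}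
    [AddCommMonoid M] [PartialOrder M] [IsOrderedAddMonoid M]
    {s : Finset α} {ι : Finset β} {P : β → α → Prop} [∀ j, DecidablePred (P j)] {f : α → M}
    (hf : ∀ t ∈ s, 0 ≤ f t) (hP : ∀ t ∈ s, ∃ j ∈ ι, P j t) :
    ∑ t ∈ s, f t ≤ ∑ j ∈ ι, ∑ t ∈ s with P j t, f t := by
  simp_rw [sum_filter]
  rw [sum_comm]
  refine sum_le_sum fun t ht => ?_
  obtain ⟨j, hj, hPj⟩ := hP t ht
  calc f t = if P j t then f t else 0 := (if_pos hPj).symm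
    _ ≤ ∑ i ∈ ι, if P i t then f t else 0 :=
      single_le_sum (f := fun i => if P i t then f t else 0)
        (fun i _ => by split_ifs <;> simp [hf t ht]) hj

theorem exists_mem_Icc_le_lt_of_le {α : Type*} [LinearOrder α] (θ : ℕ → α) {x : α}
    (hx : x ≤ θ 0) (J : ℕ) :
    ∃ j ∈ Icc 1 (J + 1), x ≤ θ (j - 1) ∧ (j = J + 1 ∨ θ j < x) := by
  induction J with
  | zero => exact ⟨1, by simp, hx, Or.inl rfl⟩
  | succ J ih =>
    obtain ⟨j, hj, hxj, rfl | hθj⟩ := ih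
    · rcases lt_or_ge (θ (J + 1)) x with hθJ | hxθ
      · exact ⟨J + 1, by simp, hxj, Or.inr hθJ⟩
      · exact ⟨J + 2, by simp, hxθ, Or.inl rfl⟩
    · exact ⟨j, by simp only [mem_Icc] at hj ⊢; omega, hxj, Or.inr hθj⟩

theorem Real.div_sqrt_add_le_two_mul_sub_sqrt {b F : ℝ} (hb : 0 ≤ b) (hF : 0 ≤ F) :
    b / √(b + F) ≤ 2 * (√(b + F) - √F) := by
  rcases (add_nonneg hb hF).eq_or_lt with h | h
  · have hF0 : F = 0 := by linarith
    rw [← h, hF0, Real.sqrt_zero, div_zero, sub_zero, mul_zero]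
  · rw [div_le_iff₀ (Real.sqrt_pos.2 h)]
    nlinarith [Real.sq_sqrt h.le, Real.sq_sqrt hF, two_mul_le_add_sq √F √(b + F)]

theorem Finset.sum_div_sqrt_prefix_sum_le_two_mul_sqrt_sum {α : Type*} [LinearOrder α]
    (s : Finset α) {f : α → ℝ} (hf : ∀ t ∈ s, 0 ≤ f t) :
    ∑ t ∈ s, f t / √(∑ u ∈ s with u ≤ t, f u) ≤ 2 * √(∑ t ∈ s, f t) := by
  induction s using Finset.induction_on_max with
  | empty => simp
  | insert a s hmax ih =>
    have ha : a ∉ s := fun h => lt_irrefl a (hmax a h)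
    have hfs : ∀ t ∈ s, 0 ≤ f t := fun t ht => hf t (mem_insert_of_mem ht)
    have hfilter_a : ({u ∈ insert a s | u ≤ a} : Finset α) = insert a s :=
      filter_true_of_mem fun u hu => (mem_insert.1 hu).elim le_of_eq fun hu => (hmax u hu).le
    have hfilter : ∀ t ∈ s, ({u ∈ insert a s | u ≤ t} : Finset α) = {u ∈ s | u ≤ t} :=
      fun t ht => by rw [filter_insert, if_neg (hmax t ht).not_ge]
    have htail : ∑ t ∈ s, f t / √(∑ u ∈ insert a s with u ≤ t, f u)
        = ∑ t ∈ s, f t / √(∑ u ∈ s with u ≤ t, f u) :=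
      sum_congr rfl fun t ht => by rw [hfilter t ht]
    rw [sum_insert ha, sum_insert ha, hfilter_a, sum_insert ha, htail]
    linarith [Real.div_sqrt_add_le_two_mul_sub_sqrt (hf a (mem_insert_self a s))
      (sum_nonneg hfs), ih hfs]

theorem Real.div_sqrt_le_sqrt_mul_div_sqrt {z A F θ : ℝ} (hz : 0 ≤ z) (hzA : z ≤ A)
    (hA : A ≤ θ * F) : z / √F ≤ √θ * (z / √A) := by
  rcases hz.eq_or_lt with rfl | hz
  · simp
  rcases le_or_gt F 0 with hF | hF
  · rw [Real.sqrt_eq_zero'.2 hF, div_zero]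
    positivity
  have hA0 : 0 < A := hz.trans_le hzA
  have hθ : 0 < θ := (pos_iff_pos_of_mul_pos (hA0.trans_le hA)).2 hF
  calc z / √F = √θ * (z / √(θ * F)) := by
        rw [Real.sqrt_mul hθ.le]
        field_simp
    _ ≤ √θ * (z / √A) := by gcongr

theorem Finset.sum_div_sqrt_le_two_mul_sqrt_mul_sum {α : Type*} [LinearOrder α]
    (s : Finset α) {z F : α → ℝ} {θ : ℝ} (hz : ∀ t ∈ s, 0 ≤ z t)
    (hF : ∀ t ∈ s, ∑ u ∈ s with u ≤ t, z u ≤ θ * F t) :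
    ∑ t ∈ s, z t / √(F t) ≤ 2 * √(θ * ∑ t ∈ s, z t) :=
  calc ∑ t ∈ s, z t / √(F t)
      ≤ ∑ t ∈ s, √θ * (z t / √(∑ u ∈ s with u ≤ t, z u)) :=
        sum_le_sum fun t ht => Real.div_sqrt_le_sqrt_mul_div_sqrt (hz t ht)
          (single_le_sum (fun u hu => hz u (mem_filter.1 hu).1) (mem_filter.2 ⟨ht, le_rfl⟩))
          (hF t ht)
    _ = √θ * ∑ t ∈ s, z t / √(∑ u ∈ s with u ≤ t, z u) := (mul_sum _ _ _).symm
    _ ≤ √θ * (2 * √(∑ t ∈ s, z t)) := by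
        gcongr
        exact sum_div_sqrt_prefix_sum_le_two_mul_sqrt_sum s hz
    _ = 2 * √(θ * ∑ t ∈ s, z t) := by
        rw [Real.sqrt_mul' θ (sum_nonneg hz)]
        ring

theorem Finset.sum_le_mul_sum_div {α : Type*} {s : Finset α} {z h : α → ℝ} {θ : ℝ}
    (hz : ∀ u ∈ s, 0 ≤ z u) (hh : ∀ u ∈ s, 0 < h u) (hθ : ∀ u ∈ s, h u ≤ θ) :
    ∑ u ∈ s, z u ≤ θ * ∑ u ∈ s, z u / h u := by
  rw [mul_sum]
  refine sum_le_sum fun u hu => ?_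
  calc z u = h u * (z u / h u) := (mul_div_cancel₀ _ (hh u hu).ne').symm
    _ ≤ θ * (z u / h u) := mul_le_mul_of_nonneg_right (hθ u hu) (div_nonneg (hz u hu) (hh u hu).le)

theorem Finset.prefix_sum_le_mul_sum_Icc_div {T t : ℕ} {C : Finset ℕ} {z h : ℕ → ℝ} {θ : ℝ}
    (hz : ∀ u ∈ Icc 1 T, 0 ≤ z u) (hh : ∀ u ∈ Icc 1 T, 0 < h u) (hC : C ⊆ Icc 1 T)
    (hθ : ∀ u ∈ C, h u ≤ θ) (ht : t ∈ C) :
    ∑ u ∈ C with u ≤ t, z u ≤ θ * ∑ s ∈ Icc 1 t, z s / h s := by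
  have htT : t ≤ T := (mem_Icc.1 (hC ht)).2
  calc ∑ u ∈ C with u ≤ t, z u ≤ θ * ∑ u ∈ C with u ≤ t, z u / h u :=
        sum_le_mul_sum_div (fun u hu => hz u (hC (mem_filter.1 hu).1))
          (fun u hu => hh u (hC (mem_filter.1 hu).1)) fun u hu => hθ u (mem_filter.1 hu).1
    _ ≤ θ * ∑ s ∈ Icc 1 t, z s / h s := by
        refine mul_le_mul_of_nonneg_left (sum_le_sum_of_subset_of_nonneg ?_ fun s hs _ => ?_)
          ((hh t (hC ht)).le.trans (hθ t ht))
        · intro u hu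
          obtain ⟨huC, hut⟩ := mem_filter.1 hu
          exact mem_Icc.2 ⟨(mem_Icc.1 (hC huC)).1, hut⟩
        · have hsT : s ∈ Icc 1 T := mem_Icc.2 ⟨(mem_Icc.1 hs).1, (mem_Icc.1 hs).2.trans htT⟩
          exact div_nonneg (hz s hsT) (hh s hsT).le

theorem stmt3_general (T J : ℕ) (z h θ : ℕ → ℝ)
    (hz : ∀ t, 1 ≤ t → t ≤ T → 0 ≤ z t)
    (hh : ∀ t, 1 ≤ t → t ≤ T → 0 < h t)
    (hθ0 : ∀ t, 1 ≤ t → t ≤ T → h t ≤ θ 0) :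
    (∑ t ∈ Finset.Icc 1 T, z t / Real.sqrt (∑ s ∈ Finset.Icc 1 t, z s / h s))
      ≤ 2 * ∑ j ∈ Finset.Icc 1 (J + 1),
          Real.sqrt (θ (j - 1) *
            ∑ t ∈ (Finset.Icc 1 T).filter
              (fun t => h t ≤ θ (j - 1) ∧ (j = J + 1 ∨ θ j < h t)), z t) := by
  have hz' : ∀ t ∈ Icc 1 T, 0 ≤ z t := fun t ht => hz t (mem_Icc.1 ht).1 (mem_Icc.1 ht).2
  have hh' : ∀ t ∈ Icc 1 T, 0 < h t := fun t ht => hh t (mem_Icc.1 ht).1 (mem_Icc.1 ht).2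
  have hcover : ∀ t ∈ Icc 1 T, ∃ j ∈ Icc 1 (J + 1), h t ≤ θ (j - 1) ∧ (j = J + 1 ∨ θ j < h t) :=
    fun t ht => exists_mem_Icc_le_lt_of_le θ (hθ0 t (mem_Icc.1 ht).1 (mem_Icc.1 ht).2) J
  rw [mul_sum]
  refine (sum_le_sum_sum_filter_of_forall_exists
    (fun t ht => div_nonneg (hz' t ht) (Real.sqrt_nonneg _)) hcover).trans
    (sum_le_sum fun j _ => sum_div_sqrt_le_two_mul_sqrt_mul_sum _
      (fun t ht => hz' t (mem_filter.1 ht).1) fun t ht => ?_)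
  exact prefix_sum_le_mul_sum_Icc_div hz' hh' (filter_subset _ _)
    (fun u hu => (mem_filter.1 hu).2.1) ht

/-- Bound on `G(z, h) = ∑ z t (∑_{s ≤ t} z s / h s)^{-1/2}` by a sum over dyadic-type
levels `θ 0 > θ 1 > ⋯ > θ J > 0` with `θ 0 ≥ max_t h t`. -/
theorem stmt3 (T J : ℕ) (z h θ : ℕ → ℝ)
    (hz : ∀ t, 1 ≤ t → t ≤ T → 0 ≤ z t)
    (hh : ∀ t, 1 ≤ t → t ≤ T → 0 < h t)
    (hθJ : 0 < θ J)
    (hθdec : ∀ j, j < J → θ (j + 1) < θ j)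
    (hθ0 : ∀ t, 1 ≤ t → t ≤ T → h t ≤ θ 0) :
    (∑ t ∈ Finset.Icc 1 T, z t / Real.sqrt (∑ s ∈ Finset.Icc 1 t, z s / h s))
      ≤ 2 * ∑ j ∈ Finset.Icc 1 (J + 1),
          Real.sqrt (θ (j - 1) *
            ∑ t ∈ (Finset.Icc 1 T).filter
              (fun t => h t ≤ θ (j - 1) ∧ (j = J + 1 ∨ θ j < h t)), z t) :=
  stmt3_general T J z h θ hz hh hθ0
end

section
/- Let z_1,...,z_T ≥ 0, let h_1,...,h_T > 0 be monotone non-increasing, and let θ_0 > θ_1 > ... > θ_J > θ_{J+1} = 0 be a decreasing sequence with θ_0 ≥ h_1. Define T_j = {t ∈ [T] : θ_{j-1} ≥ h_t > θ_j}. Then for every monotone non-decreasing sequence 0 ≤ β_1 ≤ β_2 ≤ ... ≤ β_T of positive reals, Σ_{t=1}^T ( z_t/β_t + (β_t − β_{t-1})·h_t ) ≥ 2·Σ_{j=1}^J sqrt( (θ_j − θ_{j+1})·Σ_{t ∈ T_j} z_t ), where β_0 = 0. -/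
/-!
Write `h_t` as the sum of its parts `layer θ j (h_t)` in the bands `[θ_{j+1}, θ_j]`, and let
`thresholdBlock T h θ j` be the set `T_j`. Fix `j` and let `m` be the last time in `T_j`. Since `h`
is non-increasing, `h_t > θ_j` for every `t ≤ m`, so by telescoping band `j` contributes at least
`β_m (θ_j - θ_{j+1})` to `∑ (β_t - β_{t-1}) h_t`; since `β` is non-decreasing, `T_j` contributes at
least `(∑_{t ∈ T_j} z_t) / β_m` to `∑ z_t / β_t`. AM-GM bounds the sum of the two contributions by
`2 √((θ_j - θ_{j+1}) ∑_{t ∈ T_j} z_t)`, and the bands, as well as the blocks `T_j`, do not overlap.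
-/

open Finset

lemma two_mul_sqrt_mul_le_div_add_mul {c x b : ℝ} (hc : 0 ≤ c) (hx : 0 ≤ x) (hb : 0 < b) :
    2 * √(c * x) ≤ x / b + b * c := by
  have h := two_mul_le_add_sq (√(x / b)) (√(b * c))
  rw [mul_assoc, ← Real.sqrt_mul (by positivity), Real.sq_sqrt (by positivity),
    Real.sq_sqrt (by positivity)] at h
  rwa [show x / b * (b * c) = c * x by field_simp] at h

lemma monotoneOn_Icc_of_le_succ {α : Type*} [Preorder α] {f : ℕ → α} {a b : ℕ}
    (hf : ∀ n, a ≤ n → n < b → f n ≤ f (n + 1)) : MonotoneOn f (Set.Icc a b) := by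
  rintro s ⟨has, -⟩ t ⟨-, htb⟩ hst
  induction t, hst using Nat.le_induction with
  | base => rfl
  | succ n hsn ih => exact (ih (by omega)).trans (hf n (by omega) (by omega))

lemma MonotoneOn.sub_pred_nonneg {f : ℕ → ℝ} {T t : ℕ} (hf : MonotoneOn f (Set.Icc 0 T))
    (ht : t ∈ Icc 1 T) : 0 ≤ f t - f (t - 1) := by
  rw [mem_Icc] at ht
  exact sub_nonneg.2 (hf ⟨by omega, by omega⟩ ⟨by omega, ht.2⟩ (by omega))

lemma sum_Icc_sub_pred (f : ℕ → ℝ) (m : ℕ) : ∑ t ∈ Icc 1 m, (f t - f (t - 1)) = f m - f 0 := by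
  induction m with
  | zero => simp
  | succ n ih => rw [sum_Icc_succ_top (by omega), ih, Nat.add_sub_cancel]; ring

def layer (θ : ℕ → ℝ) (j : ℕ) (x : ℝ) : ℝ := min x (θ j) - min x (θ (j + 1))

section Layer

variable {θ : ℕ → ℝ} {j : ℕ} {x : ℝ}

lemma layer_nonneg (hθ : θ (j + 1) ≤ θ j) : 0 ≤ layer θ j x :=
  sub_nonneg.2 (min_le_min_left x hθ)

lemma layer_of_le (hθ : θ (j + 1) ≤ θ j) (hx : θ j ≤ x) : layer θ j x = θ j - θ (j + 1) := by
  rw [layer, min_eq_right hx, min_eq_right (hθ.trans hx)]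

lemma sum_Icc_layer (J : ℕ) : ∑ j ∈ Icc 1 J, layer θ j x = min x (θ 1) - min x (θ (J + 1)) := by
  rw [← Ico_add_one_right_eq_Icc, ← neg_sub, ← sum_Ico_sub (f := fun j => min x (θ j)) (by omega),
    ← sum_neg_distrib]
  simp only [layer, neg_sub]

lemma sum_Icc_layer_le {J : ℕ} (hx : 0 ≤ x) (hθ : θ (J + 1) = 0) :
    ∑ j ∈ Icc 1 J, layer θ j x ≤ x := by
  rw [sum_Icc_layer, hθ, min_eq_right hx, sub_zero]
  exact min_le_left _ _

end Layer

lemma sum_sum_mul_layer_le {ι : Type*} (s : Finset ι) (w h : ι → ℝ) {θ : ℕ → ℝ} {J : ℕ}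
    (hw : ∀ t ∈ s, 0 ≤ w t) (hh : ∀ t ∈ s, 0 ≤ h t) (hθ : θ (J + 1) = 0) :
    ∑ j ∈ Icc 1 J, ∑ t ∈ s, w t * layer θ j (h t) ≤ ∑ t ∈ s, w t * h t := by
  rw [sum_comm]
  gcongr with t ht
  rw [← mul_sum]
  exact mul_le_mul_of_nonneg_left (sum_Icc_layer_le (hh t ht) hθ) (hw t ht)

lemma mul_sub_le_sum_mul_layer {T m j : ℕ} {β h θ : ℕ → ℝ} (hmT : m ≤ T)
    (hβ : ∀ t ∈ Icc 1 T, 0 ≤ β t - β (t - 1)) (hθ : θ (j + 1) ≤ θ j)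
    (hθh : ∀ t ∈ Icc 1 m, θ j ≤ h t) :
    (β m - β 0) * (θ j - θ (j + 1)) ≤ ∑ t ∈ Icc 1 T, (β t - β (t - 1)) * layer θ j (h t) := by
  calc (β m - β 0) * (θ j - θ (j + 1))
      = ∑ t ∈ Icc 1 m, (β t - β (t - 1)) * layer θ j (h t) := by
        rw [← sum_Icc_sub_pred, sum_mul]
        exact sum_congr rfl fun t ht => by rw [layer_of_le hθ (hθh t ht)]
    _ ≤ ∑ t ∈ Icc 1 T, (β t - β (t - 1)) * layer θ j (h t) :=
        sum_le_sum_of_subset_of_nonneg (Icc_subset_Icc_right hmT) fun t ht _ =>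
          mul_nonneg (hβ t ht) (layer_nonneg hθ)

lemma two_mul_sqrt_mul_sum_le {ι : Type*} {s : Finset ι} {z β : ι → ℝ} {m : ι} {c : ℝ}
    (hm : m ∈ s) (hz : ∀ t ∈ s, 0 ≤ z t) (hβ : ∀ t ∈ s, 0 < β t) (hβm : ∀ t ∈ s, β t ≤ β m)
    (hc : 0 ≤ c) :
    2 * √(c * ∑ t ∈ s, z t) ≤ ∑ t ∈ s, z t / β t + β m * c := by
  calc 2 * √(c * ∑ t ∈ s, z t)
      ≤ (∑ t ∈ s, z t) / β m + β m * c :=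
        two_mul_sqrt_mul_le_div_add_mul hc (sum_nonneg hz) (hβ m hm)
    _ ≤ ∑ t ∈ s, z t / β t + β m * c := by
        rw [sum_div]
        gcongr with t ht
        exacts [hz t ht, hβ t ht, hβm t ht]

noncomputable def thresholdBlock (T : ℕ) (h θ : ℕ → ℝ) (j : ℕ) : Finset ℕ :=
  (Icc 1 T).filter fun t => h t ≤ θ (j - 1) ∧ θ j < h t

section ThresholdBlock

variable {T J : ℕ} {h θ : ℕ → ℝ}

lemma pairwiseDisjoint_thresholdBlock (hθ : AntitoneOn θ (Set.Iic J)) :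
    (Icc 1 J : Set ℕ).PairwiseDisjoint (thresholdBlock T h θ) := by
  suffices ∀ i ∈ Icc 1 J, ∀ j ∈ Icc 1 J, i < j →
      Disjoint (thresholdBlock T h θ i) (thresholdBlock T h θ j) by
    intro i hi j hj hij
    rcases hij.lt_or_gt with hlt | hlt
    exacts [this i hi j hj hlt, (this j hj i hi hlt).symm]
  intro i hi j hj hij
  rw [mem_Icc] at hi hj
  refine disjoint_left.2 fun t hti htj => ?_
  have hθij : θ (j - 1) ≤ θ i := hθ (by simp; omega) (by simp; omega) (by omega)
  simp only [thresholdBlock, mem_filter] at hti htj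
  linarith [hti.2.2, htj.2.1]

lemma sum_sum_thresholdBlock_le (g : ℕ → ℝ) (hθ : AntitoneOn θ (Set.Iic J))
    (hg : ∀ t ∈ Icc 1 T, 0 ≤ g t) :
    ∑ j ∈ Icc 1 J, ∑ t ∈ thresholdBlock T h θ j, g t ≤ ∑ t ∈ Icc 1 T, g t := by
  rw [← sum_biUnion (pairwiseDisjoint_thresholdBlock hθ)]
  exact sum_le_sum_of_subset_of_nonneg (biUnion_subset.2 fun _ _ => filter_subset _ _)
    fun t ht _ => hg t ht

end ThresholdBlock

lemma two_mul_sqrt_le_thresholdBlock {T j : ℕ} {z h θ β : ℕ → ℝ}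
    (hz : ∀ t ∈ Icc 1 T, 0 ≤ z t) (hh : AntitoneOn h (Set.Icc 1 T)) (hθ : θ (j + 1) < θ j)
    (hβ0 : β 0 = 0) (hβpos : ∀ t ∈ Icc 1 T, 0 < β t) (hβ : MonotoneOn β (Set.Icc 0 T)) :
    2 * √((θ j - θ (j + 1)) * ∑ t ∈ thresholdBlock T h θ j, z t)
      ≤ ∑ t ∈ thresholdBlock T h θ j, z t / β t
        + ∑ t ∈ Icc 1 T, (β t - β (t - 1)) * layer θ j (h t) := by
  have hβstep : ∀ t ∈ Icc 1 T, 0 ≤ β t - β (t - 1) := fun _ ht => hβ.sub_pred_nonneg ht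
  have hblock : thresholdBlock T h θ j ⊆ Icc 1 T := filter_subset _ _
  rcases (thresholdBlock T h θ j).eq_empty_or_nonempty with hempty | hne
  · rw [hempty, sum_empty, sum_empty, mul_zero, Real.sqrt_zero, mul_zero, zero_add]
    exact sum_nonneg fun t ht => mul_nonneg (hβstep t ht) (layer_nonneg hθ.le)
  set m := (thresholdBlock T h θ j).max' hne
  have hm : m ∈ thresholdBlock T h θ j := max'_mem _ hne
  have hmT := mem_Icc.1 (hblock hm)
  have hθm : θ j < h m := (mem_filter.1 hm).2.2
  have hθh : ∀ t ∈ Icc 1 m, θ j ≤ h t := fun t ht => by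
    rw [mem_Icc] at ht
    exact hθm.le.trans (hh ⟨ht.1, by omega⟩ hmT ht.2)
  calc _ ≤ ∑ t ∈ thresholdBlock T h θ j, z t / β t + β m * (θ j - θ (j + 1)) :=
        two_mul_sqrt_mul_sum_le hm (fun t ht => hz t (hblock ht)) (fun t ht => hβpos t (hblock ht))
          (fun t ht => hβ ⟨Nat.zero_le _, (mem_Icc.1 (hblock ht)).2⟩ ⟨Nat.zero_le _, hmT.2⟩
            (le_max' _ t ht))
          (sub_nonneg.2 hθ.le)
    _ ≤ _ := by
        gcongr
        simpa [hβ0] using mul_sub_le_sum_mul_layer hmT.2 hβstep hθ.le hθh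

theorem stmt5_general (T J : ℕ) (z h θ β : ℕ → ℝ)
    (hz : ∀ t, 1 ≤ t → t ≤ T → 0 ≤ z t)
    (hh : ∀ t, 1 ≤ t → t ≤ T → 0 < h t)
    (hhmono : ∀ t' t, 1 ≤ t' → t' ≤ t → t ≤ T → h t ≤ h t')
    (hθdec : ∀ j, j ≤ J → θ (j + 1) < θ j)
    (hθlast : θ (J + 1) = 0)
    (hβ0 : β 0 = 0)
    (hβpos : ∀ t, 1 ≤ t → t ≤ T → 0 < β t)
    (hβmono : ∀ t, 1 ≤ t → t < T → β t ≤ β (t + 1)) :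
    2 * (∑ j ∈ Finset.Icc 1 J,
          Real.sqrt ((θ j - θ (j + 1)) *
            ∑ t ∈ (Finset.Icc 1 T).filter
              (fun t => h t ≤ θ (j - 1) ∧ θ j < h t), z t))
      ≤ ∑ t ∈ Finset.Icc 1 T, (z t / β t + (β t - β (t - 1)) * h t) := by
  have hz' : ∀ t ∈ Icc 1 T, 0 ≤ z t := fun t ht => hz t (mem_Icc.1 ht).1 (mem_Icc.1 ht).2
  have hh' : ∀ t ∈ Icc 1 T, 0 ≤ h t := fun t ht => (hh t (mem_Icc.1 ht).1 (mem_Icc.1 ht).2).le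
  have hβpos' : ∀ t ∈ Icc 1 T, 0 < β t := fun t ht => hβpos t (mem_Icc.1 ht).1 (mem_Icc.1 ht).2
  have hh_anti : AntitoneOn h (Set.Icc 1 T) := fun a ha b hb hab => hhmono a b ha.1 hab hb.2
  have hβ : MonotoneOn β (Set.Icc 0 T) := monotoneOn_Icc_of_le_succ fun n _ hn => by
    rcases n.eq_zero_or_pos with rfl | hn0
    · simpa [hβ0] using (hβpos 1 le_rfl hn).le
    · exact hβmono n hn0 hn
  have hθ : AntitoneOn θ (Set.Iic J) :=
    (strictAntiOn_Iic_of_succ_lt fun j hj => hθdec j (by omega)).antitoneOn.mono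
      (Set.Iic_subset_Iic.2 (Nat.le_succ J))
  calc _ = ∑ j ∈ Icc 1 J, 2 * √((θ j - θ (j + 1)) * ∑ t ∈ thresholdBlock T h θ j, z t) :=
        mul_sum _ _ _
    _ ≤ ∑ j ∈ Icc 1 J, (∑ t ∈ thresholdBlock T h θ j, z t / β t
          + ∑ t ∈ Icc 1 T, (β t - β (t - 1)) * layer θ j (h t)) := by
        gcongr with j hj
        exact two_mul_sqrt_le_thresholdBlock hz' hh_anti (hθdec j (mem_Icc.1 hj).2) hβ0 hβpos' hβ
    _ ≤ ∑ t ∈ Icc 1 T, z t / β t + ∑ t ∈ Icc 1 T, (β t - β (t - 1)) * h t := by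
        rw [sum_add_distrib]
        gcongr ?_ + ?_
        · exact sum_sum_thresholdBlock_le _ hθ fun t ht => div_nonneg (hz' t ht) (hβpos' t ht).le
        · exact sum_sum_mul_layer_le _ _ _ (fun _ ht => hβ.sub_pred_nonneg ht) hh' hθlast
    _ = _ := sum_add_distrib.symm

/-- Lower bound on `F(β; z, h)` for monotone non-increasing positive `h`,
for any monotone non-decreasing positive learning-rate sequence `β`. -/
theorem stmt5 (T J : ℕ) (z h θ β : ℕ → ℝ)
    (hz : ∀ t, 1 ≤ t → t ≤ T → 0 ≤ z t)
    (hh : ∀ t, 1 ≤ t → t ≤ T → 0 < h t)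
    (hhmono : ∀ t' t, 1 ≤ t' → t' ≤ t → t ≤ T → h t ≤ h t')
    (hθdec : ∀ j, j ≤ J → θ (j + 1) < θ j)
    (hθlast : θ (J + 1) = 0)
    (hθ0 : ∀ t, 1 ≤ t → t ≤ T → h t ≤ θ 0)
    (hβ0 : β 0 = 0)
    (hβpos : ∀ t, 1 ≤ t → t ≤ T → 0 < β t)
    (hβmono : ∀ t, 1 ≤ t → t < T → β t ≤ β (t + 1)) :
    2 * (∑ j ∈ Finset.Icc 1 J,
          Real.sqrt ((θ j - θ (j + 1)) *
            ∑ t ∈ (Finset.Icc 1 T).filter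
              (fun t => h t ≤ θ (j - 1) ∧ θ j < h t), z t))
      ≤ ∑ t ∈ Finset.Icc 1 T, (z t / β t + (β t - β (t - 1)) * h t) :=
  stmt5_general T J z h θ β hz hh hhmono hθdec hθlast hβ0 hβpos hβmono
end

section
/- For every T ∈ ℕ with T ≥ 2, every ξ ≥ 1, and every β_1 > 0, it holds that max( (1/β_1 + β_1)/2 , sqrt(ξ(T−1)/T) − ξ·β_1/(2·sqrt(T)) ) ≥ sqrt(ξ)·sqrt(T−1)/(sqrt(T) + ξ). -/
/-! The first branch is at least `β/2`, and the second is the decreasing linear function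
`A - mβ` with `A = √(ξ(T-1)/T)` and `m = ξ/(2√T)`. The convex combination with weights
`2m/(1+2m)` and `1/(1+2m)` eliminates `β`, so the maximum is at least `A/(1+2m)`, which
simplifies to `√ξ·√(T-1)/(√T+ξ)`. -/

lemma div_one_add_two_mul_le_max_half {m : ℝ} (hm : 0 ≤ m) (A β : ℝ) :
    A / (1 + 2 * m) ≤ max (β / 2) (A - m * β) := by
  have hleft : 2 * m * (β / 2) ≤ 2 * m * max (β / 2) (A - m * β) :=
    mul_le_mul_of_nonneg_left (le_max_left _ _) (by positivity)
  have hright : A - m * β ≤ max (β / 2) (A - m * β) := le_max_right _ _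
  rw [div_le_iff₀ (by positivity)]
  linarith

/-- Key optimization step in the competitive-ratio lower bound:
for `T ≥ 2`, `ξ ≥ 1`, `β > 0`,
`max ((1/β + β)/2) (sqrt (ξ(T-1)/T) - ξβ/(2 sqrt T)) ≥ sqrt ξ · sqrt (T-1) / (sqrt T + ξ)`. -/
theorem stmt6 (T : ℕ) (ξ β : ℝ) (hT : 2 ≤ T) (hξ : 1 ≤ ξ) (hβ : 0 < β) :
    Real.sqrt ξ * Real.sqrt ((T : ℝ) - 1) / (Real.sqrt (T : ℝ) + ξ)
      ≤ max ((1 / β + β) / 2)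
          (Real.sqrt (ξ * ((T : ℝ) - 1) / (T : ℝ)) - ξ * β / (2 * Real.sqrt (T : ℝ))) := by
  have hT' : (2 : ℝ) ≤ T := by exact_mod_cast hT
  have hs : 0 < Real.sqrt (T : ℝ) := Real.sqrt_pos.mpr (by linarith)
  have hsqrt : Real.sqrt (ξ * ((T : ℝ) - 1) / (T : ℝ))
      = Real.sqrt ξ * Real.sqrt ((T : ℝ) - 1) / Real.sqrt (T : ℝ) := by
    rw [Real.sqrt_div (by nlinarith), Real.sqrt_mul (by linarith)]
  have hbound : Real.sqrt ξ * Real.sqrt ((T : ℝ) - 1) / (Real.sqrt (T : ℝ) + ξ)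
      = Real.sqrt ξ * Real.sqrt ((T : ℝ) - 1) / Real.sqrt (T : ℝ)
        / (1 + 2 * (ξ / (2 * Real.sqrt (T : ℝ)))) := by
    field_simp
  rw [hbound, hsqrt]
  refine (div_one_add_two_mul_le_max_half (by positivity) _ β).trans (max_le_max ?_ ?_)
  · have : 0 < 1 / β := by positivity
    linarith
  · rw [div_mul_eq_mul_div]
end

section
/- Let z_{1:T} and h_{1:T} be two instances with z_1=1, h_1=1 and z_t=0, h_t=ξ for t ≥ 2; and z'_t = 1 for all t with the same h. Then the offline optima satisfy F*(z_{1:T}, h_{1:T}) = 2 and F*(z'_{1:T}, h_{1:T}) ≤ 2·sqrt(T), where F*(z,h) = inf over 0 ≤ β_1 ≤ ... ≤ β_T of Σ_{t=1}^T ( z_t/β_t + (β_t − β_{t-1})·h_t ) with β_0 = 0. -/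
/-!
When `z` vanishes after round 1, every admissible `β` pays `z₁ / β₁ + β₁ h₁` in the first round and nothing negative afterwards,
since `β` is nondecreasing and `h ≥ 0`. For the first instance this is `1 / β₁ + β₁ ≥ 2`, attained
by the constant schedule `β ≡ 1`. For the second instance the constant schedule `β ≡ c` costs
`T / c + c`, which is `2 √T` at `c = √T`.
-/

open Finset

namespace OfflineSchedule

def IsSchedule (T : ℕ) (β : ℕ → ℝ) : Prop :=
  β 0 = 0 ∧ (∀ t, 1 ≤ t → t ≤ T → 0 < β t) ∧ (∀ t, 1 ≤ t → t < T → β t ≤ β (t + 1))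

noncomputable def cost (T : ℕ) (z h β : ℕ → ℝ) : ℝ :=
  ∑ t ∈ Icc 1 T, (z t / β t + (β t - β (t - 1)) * h t)

def const (c : ℝ) : ℕ → ℝ := fun t => if t = 0 then 0 else c

variable {T : ℕ} {z h β : ℕ → ℝ}

theorem IsSchedule.sub_prev_nonneg (hβ : IsSchedule T β) {t : ℕ} (ht : t ∈ Icc 1 T) :
    0 ≤ β t - β (t - 1) := by
  obtain ⟨hβ0, hpos, hmono⟩ := hβ
  obtain ⟨ht1, htT⟩ := mem_Icc.1 ht
  rcases ht1.eq_or_lt with rfl | ht1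
  · simpa [hβ0] using (hpos 1 le_rfl htT).le
  · have := hmono (t - 1) (by omega) (by omega)
    rw [Nat.sub_add_cancel ht1.le] at this
    linarith

theorem cost_nonneg (hβ : IsSchedule T β) (hz : ∀ t ∈ Icc 1 T, 0 ≤ z t)
    (hh : ∀ t ∈ Icc 1 T, 0 ≤ h t) : 0 ≤ cost T z h β := by
  refine sum_nonneg fun t ht => add_nonneg ?_ (mul_nonneg (hβ.sub_prev_nonneg ht) (hh t ht))
  obtain ⟨ht1, htT⟩ := mem_Icc.1 ht
  exact div_nonneg (hz t ht) (hβ.2.1 t ht1 htT).le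

theorem first_round_le_cost (hβ : IsSchedule T β) (hT : 1 ≤ T)
    (hz : ∀ t, 2 ≤ t → z t = 0) (hh : ∀ t, 2 ≤ t → 0 ≤ h t) :
    z 1 / β 1 + β 1 * h 1 ≤ cost T z h β := by
  have hrest : 0 ≤ ∑ t ∈ Ioc 1 T, (z t / β t + (β t - β (t - 1)) * h t) := by
    refine sum_nonneg fun t ht => ?_
    obtain ⟨ht2, htT⟩ := mem_Ioc.1 ht
    rw [hz t ht2, zero_div, zero_add]
    exact mul_nonneg (hβ.sub_prev_nonneg (mem_Icc.2 ⟨ht2.le, htT⟩)) (hh t ht2)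
  rw [cost, Icc_eq_cons_Ioc hT, sum_cons, Nat.sub_self, hβ.1, sub_zero]
  linarith

theorem isSchedule_const {c : ℝ} (hc : 0 < c) : IsSchedule T (const c) :=
  ⟨if_pos rfl, fun t ht _ => by simpa [const, Nat.one_le_iff_ne_zero.1 ht] using hc,
    fun t ht _ => by simp [const, Nat.one_le_iff_ne_zero.1 ht]⟩

theorem cost_const (hT : 1 ≤ T) (c : ℝ) :
    cost T z h (const c) = (∑ t ∈ Icc 1 T, z t) / c + c * h 1 := by
  have hterm : ∀ t ∈ Icc 1 T, z t / const c t + (const c t - const c (t - 1)) * h t =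
      z t / c + if t = 1 then c * h 1 else 0 := by
    intro t ht
    obtain ⟨ht1, -⟩ := mem_Icc.1 ht
    rcases ht1.eq_or_lt with rfl | ht1
    · simp [const]
    · simp [const, show t ≠ 0 by omega, show t - 1 ≠ 0 by omega, show t ≠ 1 by omega]
  rw [cost, sum_congr rfl hterm, sum_add_distrib, sum_div, sum_ite_eq' (Icc 1 T) 1,
    if_pos (mem_Icc.2 ⟨le_rfl, hT⟩)]

end OfflineSchedule

theorem two_le_one_div_add_self {b : ℝ} (hb : 0 < b) : 2 ≤ 1 / b + b := by
  have : 1 / b + b - 2 = (b - 1) ^ 2 / b := by field_simp; ring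
  nlinarith [div_nonneg (sq_nonneg (b - 1)) hb.le]

open OfflineSchedule in
/-- Offline optima for the two instances in the lower-bound proof:
`F*(z, h) = 2` and `F*(z', h) ≤ 2 √T`. -/
theorem stmt7 (T : ℕ) (ξ : ℝ) (hT : 1 ≤ T) (hξ : 1 ≤ ξ)
    (z z' h : ℕ → ℝ)
    (hz1 : z 1 = 1) (hzt : ∀ t, 2 ≤ t → z t = 0)
    (hz' : ∀ t, z' t = 1)
    (hh1 : h 1 = 1) (hht : ∀ t, 2 ≤ t → h t = ξ)
    (Fstar : (ℕ → ℝ) → (ℕ → ℝ) → ℝ)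
    (hF : ∀ zz hh, Fstar zz hh = sInf {y : ℝ | ∃ β : ℕ → ℝ, β 0 = 0 ∧
      (∀ t, 1 ≤ t → t ≤ T → 0 < β t) ∧
      (∀ t, 1 ≤ t → t < T → β t ≤ β (t + 1)) ∧
      y = ∑ t ∈ Finset.Icc 1 T, (zz t / β t + (β t - β (t - 1)) * hh t)}) :
    Fstar z h = 2 ∧ Fstar z' h ≤ 2 * Real.sqrt (T : ℝ) := by
  have hF' : ∀ zz hh, Fstar zz hh = sInf (cost T zz hh '' {β | IsSchedule T β}) := by
    intro zz hh
    simp only [hF, cost, IsSchedule, Set.image, Set.mem_ofPred_eq, and_assoc, eq_comm]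
  have hh_nonneg : ∀ t, 1 ≤ t → 0 ≤ h t := fun t ht => by
    rcases ht.eq_or_lt with rfl | ht
    · rw [hh1]; exact zero_le_one
    · rw [hht t ht]; linarith
  have hz_sum : ∑ t ∈ Icc 1 T, z t = 1 := by
    rw [sum_eq_single_of_mem 1 (mem_Icc.2 ⟨le_rfl, hT⟩) fun t ht ht1 => hzt t (by
      have := (mem_Icc.1 ht).1; omega), hz1]
  have hs : 0 < Real.sqrt T := Real.sqrt_pos.2 (by exact_mod_cast hT)
  constructor
  · refine hF' z h ▸ IsLeast.csInf_eq ⟨⟨const 1, isSchedule_const one_pos, ?_⟩, ?_⟩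
    · rw [cost_const hT, hz_sum, hh1]; norm_num
    · rintro _ ⟨β, hβ, rfl⟩
      have := first_round_le_cost hβ hT hzt fun t ht => hh_nonneg t (by omega)
      rw [hz1, hh1, mul_one] at this
      exact (two_le_one_div_add_self (hβ.2.1 1 le_rfl hT)).trans this
  · rw [hF']
    refine csInf_le ⟨0, Set.forall_mem_image.2 fun β hβ => cost_nonneg hβ
      (fun t _ => (hz' t).symm ▸ zero_le_one) fun t ht => hh_nonneg t (mem_Icc.1 ht).1⟩
      ⟨const (Real.sqrt T), isSchedule_const hs, ?_⟩
    rw [cost_const hT, sum_congr rfl fun t _ => hz' t, sum_const, Nat.card_Icc,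
      Nat.add_sub_cancel, nsmul_one, hh1, mul_one, Real.div_sqrt]
    ring
end

section
/- Let α ∈ (0,1), q ∈ (0,1), and ℓ ∈ ℝ with ℓ ≥ −((1−α)/2)·q^{α−1}. Then for all p ∈ (0,1), ℓ·(q−p) − d(p,q) ≤ 2·q^{2−α}·ℓ²/(1−α), where d(p,q) = α^{-1}q^α + (p−q)q^{α−1} − α^{-1}p^α. -/
/-!
Write `D(p, q)` for the Bregman divergence of `f x = -x^α/α`. It is homogeneous of degree `α`,
`D(p, q) = q^α D(p/q, 1)`, and the hypothesis and the bound scale the same way once `ℓ` is replaced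
by `λ = ℓ q^(1-α)`; so it suffices to take `q = 1`. Since `f'' x = (1-α) x^(α-2) ≥ (1-α)/4` on
`(0, 2]`, there `D(s, 1) ≥ (1-α)/8 (s-1)²`, and completing the square gives
`λ(1-s) - D(s, 1) ≤ 2λ²/(1-α)`. For `s > 2` the left-hand side is at most its value at `s = 2`:
`D(·, 1)` grows at least with slope `f' 2 - f' 1 = 1 - 2^(α-1) ≥ (1-α)/2 ≥ -λ` beyond `2`.
-/

open Real Set

theorem mul_sq_le_sub_sub_mul_of_hasDerivAt2 {f f' f'' : ℝ → ℝ} {a b c : ℝ}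
    (hf : ∀ x ∈ uIcc a b, HasDerivAt f (f' x) x) (hf' : ∀ x ∈ uIcc a b, HasDerivAt f' (f'' x) x)
    (hc : ∀ x ∈ uIcc a b, c ≤ f'' x) :
    c / 2 * (b - a) ^ 2 ≤ f b - f a - f' a * (b - a) := by
  set g : ℝ → ℝ := fun x => f x - c / 2 * x ^ 2
  have hg : ∀ x ∈ uIcc a b, HasDerivAt g (f' x - c * x) x := fun x hx =>
    ((hf x hx).sub ((hasDerivAt_pow 2 x).const_mul (c / 2))).congr_deriv (by ring)
  have hg' : ∀ x ∈ uIcc a b, HasDerivAt (fun x => f' x - c * x) (f'' x - c) x := fun x hx =>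
    ((hf' x hx).sub ((hasDerivAt_id' x).const_mul c)).congr_deriv (by ring)
  have hconv : ConvexOn ℝ (uIcc a b) g := convexOn_of_hasDerivWithinAt2_nonneg (convex_uIcc a b)
    (fun x hx => (hg x hx).continuousAt.continuousWithinAt)
    (fun x hx => (hg x (interior_subset hx)).hasDerivWithinAt)
    (fun x hx => (hg' x (interior_subset hx)).hasDerivWithinAt)
    (fun x hx => sub_nonneg.2 (hc x (interior_subset hx)))
  have tangent : (f' a - c * a) * (b - a) ≤ g b - g a := by
    rcases lt_trichotomy a b with hab | rfl | hab
    · have := hconv.le_slope_of_hasDerivAt left_mem_uIcc right_mem_uIcc hab (hg a left_mem_uIcc)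
      rwa [slope_def_field, le_div_iff₀ (sub_pos.2 hab)] at this
    · simp
    · have := hconv.slope_le_of_hasDerivAt right_mem_uIcc left_mem_uIcc hab (hg a left_mem_uIcc)
      rw [slope_def_field, div_le_iff₀ (sub_pos.2 hab)] at this
      linarith
  linear_combination tangent

noncomputable def tsallisBregman (α p q : ℝ) : ℝ :=
  α⁻¹ * q ^ α + (p - q) * q ^ (α - 1) - α⁻¹ * p ^ α

section tsallisBregman

variable {α a b c l p q s t : ℝ}

theorem tsallisBregman_eq_rpow_mul (hp : 0 ≤ p) (hq : 0 < q) :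
    tsallisBregman α p q = q ^ α * tsallisBregman α (p / q) 1 := by
  simp only [tsallisBregman, one_rpow, div_rpow hp hq.le, rpow_sub_one hq.ne']
  field_simp

theorem tsallisBregman_eq_add_add (α p q r : ℝ) :
    tsallisBregman α p q =
      tsallisBregman α p r + tsallisBregman α r q + (q ^ (α - 1) - r ^ (α - 1)) * (p - r) := by
  unfold tsallisBregman
  ring

theorem mul_sq_le_tsallisBregman (hα : α ≠ 0) (ha : 0 < a) (hb : 0 < b)
    (hc : ∀ x ∈ uIcc a b, c ≤ (1 - α) * x ^ (α - 2)) :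
    c / 2 * (b - a) ^ 2 ≤ tsallisBregman α b a := by
  have hpos : ∀ x ∈ uIcc a b, x ≠ 0 := fun x hx => ((lt_min ha hb).trans_le hx.1).ne'
  have hf : ∀ x ∈ uIcc a b, HasDerivAt (fun x => -(α⁻¹ * x ^ α)) (-x ^ (α - 1)) x := fun x hx =>
    ((hasDerivAt_rpow_const (Or.inl (hpos x hx))).const_mul α⁻¹).neg.congr_deriv (by field_simp)
  have hf' : ∀ x ∈ uIcc a b, HasDerivAt (fun x => -x ^ (α - 1)) ((1 - α) * x ^ (α - 2)) x :=
    fun x hx => (hasDerivAt_rpow_const (Or.inl (hpos x hx))).neg.congr_deriv (by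
      rw [show α - 1 - 1 = α - 2 by ring]
      ring)
  have := mul_sq_le_sub_sub_mul_of_hasDerivAt2 hf hf' hc
  unfold tsallisBregman
  linarith

theorem two_rpow_sub_one_le (hα0 : 0 ≤ α) (hα1 : α ≤ 1) : (2 : ℝ) ^ (α - 1) ≤ (1 + α) / 2 := by
  have h := rpow_one_add_le_one_add_mul_self (s := 1) (by norm_num) hα0 hα1
  rw [rpow_sub_one two_ne_zero]
  norm_num at h ⊢
  linarith

theorem mul_sq_le_tsallisBregman_one (hα0 : 0 < α) (hα1 : α < 1) (ht0 : 0 < t) (ht2 : t ≤ 2) :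
    (1 - α) / 8 * (t - 1) ^ 2 ≤ tsallisBregman α t 1 := by
  have h := mul_sq_le_tsallisBregman (c := (1 - α) / 4) hα0.ne' one_pos ht0 fun x hx => by
    have hx0 : 0 < x := (lt_min one_pos ht0).trans_le hx.1
    have hx2 : x ≤ 2 := hx.2.trans (max_le one_le_two ht2)
    have hquarter : (1 : ℝ) / 4 ≤ x ^ (α - 2) := calc
      (1 : ℝ) / 4 = 2 ^ (-2 : ℝ) := by norm_num [rpow_neg]
      _ ≤ 2 ^ (α - 2) := rpow_le_rpow_of_exponent_le one_le_two (by linarith)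
      _ ≤ x ^ (α - 2) := rpow_le_rpow_of_nonpos hx0 hx2 (by linarith)
    nlinarith
  linarith

theorem mul_one_sub_sub_tsallisBregman_le (hα0 : 0 < α) (hα1 : α < 1) (hs : 0 < s)
    (hl : -((1 - α) / 2) ≤ l) :
    l * (1 - s) - tsallisBregman α s 1 ≤ 2 * l ^ 2 / (1 - α) := by
  have h1α : 0 < 1 - α := by linarith
  have near : ∀ t, 0 < t → t ≤ 2 → l * (1 - t) - tsallisBregman α t 1 ≤ 2 * l ^ 2 / (1 - α) := by
    intro t ht0 ht2
    have := mul_sq_le_tsallisBregman_one hα0 hα1 ht0 ht2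
    rw [le_div_iff₀ h1α]
    nlinarith [sq_nonneg (4 * l - (1 - α) * (1 - t))]
  rcases le_or_gt s 2 with hs2 | hs2
  · exact near s hs hs2
  have hD2 : 0 ≤ tsallisBregman α s 2 := by
    simpa using mul_sq_le_tsallisBregman (c := 0) hα0.ne' two_pos hs fun x hx =>
      mul_nonneg h1α.le (rpow_nonneg ((lt_min two_pos hs).trans_le hx.1).le _)
  have hslope := two_rpow_sub_one_le hα0.le hα1.le
  calc l * (1 - s) - tsallisBregman α s 1 ≤ l * (1 - 2) - tsallisBregman α 2 1 := by
        rw [tsallisBregman_eq_add_add α s 1 2, one_rpow]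
        nlinarith
    _ ≤ 2 * l ^ 2 / (1 - α) := near 2 two_pos le_rfl

end tsallisBregman

/-- One-dimensional stability lemma for α-Tsallis entropy:
if `ℓ ≥ -((1-α)/2) q^(α-1)` then `ℓ(q-p) - d(p,q) ≤ 2 q^(2-α) ℓ² / (1-α)`. -/
theorem stmt9 (α p q ℓ : ℝ) (hα : α ∈ Set.Ioo (0 : ℝ) 1)
    (hp : p ∈ Set.Ioo (0 : ℝ) 1) (hq : q ∈ Set.Ioo (0 : ℝ) 1)
    (hℓ : -((1 - α) / 2 * q ^ (α - 1)) ≤ ℓ) :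
    ℓ * (q - p) - (α⁻¹ * q ^ α + (p - q) * q ^ (α - 1) - α⁻¹ * p ^ α)
      ≤ 2 * q ^ (2 - α) * ℓ ^ (2 : ℕ) / (1 - α) := by
  obtain ⟨hq0, -⟩ := hq
  have hq₁ : q ^ (α - 1) * q ^ (1 - α) = 1 := by rw [← rpow_add hq0]; simp
  have hq₂ : q ^ (1 - α) * q ^ α = q := by rw [← rpow_add hq0]; simp
  have hq₃ : (q ^ (1 - α)) ^ 2 * q ^ α = q ^ (2 - α) := by
    rw [← rpow_natCast, ← rpow_mul hq0.le, ← rpow_add hq0]; ring_nf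
  have hl : -((1 - α) / 2) ≤ ℓ * q ^ (1 - α) := by
    have := mul_le_mul_of_nonneg_right hℓ (rpow_nonneg hq0.le (1 - α))
    linear_combination this + (1 - α) / 2 * hq₁
  have key := mul_one_sub_sub_tsallisBregman_le hα.1 hα.2 (div_pos hp.1 hq0) hl
  calc ℓ * (q - p) - tsallisBregman α p q
      = q ^ α * (ℓ * q ^ (1 - α) * (1 - p / q) - tsallisBregman α (p / q) 1) := by
        rw [tsallisBregman_eq_rpow_mul hp.1.le hq0]
        field_simp
        linear_combination ℓ * (p - q) * hq₂
    _ ≤ q ^ α * (2 * (ℓ * q ^ (1 - α)) ^ 2 / (1 - α)) := by gcongr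
    _ = 2 * q ^ (2 - α) * ℓ ^ (2 : ℕ) / (1 - α) := by rw [← hq₃]; ring
end

section
/- Let α ∈ (0,1), ω > 1, and let q, r be probability vectors in the K-simplex with r_i ≤ ω·q_i for all i ∈ [K]. Then −ψ(r) ≤ −(1 + (ω−1)α)·ψ(q) ≤ −ω·ψ(q), where ψ(p) = −(1/α)·Σ_{i=1}^K (p_i^α − p_i). -/
/-!
The tangent-line bound for the concave map `x ↦ x ^ α` at `q i` gives
`∑ r_i^α ≤ ∑ q_i^α + α ∑ (q_i^(α-1) - 1)(r_i - q_i)`, where the `- 1` is free because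
`∑ r_i = ∑ q_i`. On the simplex `q_i^(α-1) ≥ 1`, so `r_i - q_i ≤ (ω - 1) q_i` bounds each term
by `(ω - 1)(q_i^α - q_i)`, i.e. the sum by `(ω - 1)(∑ q_i^α - 1) = (ω - 1) α (-ψ(q))`.
Finally `-ψ(q) ≥ 0` and `1 + (ω - 1) α ≤ ω`.
-/

open Finset

namespace Real

theorem rpow_le_rpow_add_mul_sub {α x y : ℝ} (hα0 : 0 ≤ α) (hα1 : α ≤ 1) (hx : 0 < x)
    (hy : 0 ≤ y) : y ^ α ≤ x ^ α + α * x ^ (α - 1) * (y - x) := by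
  have bernoulli := rpow_one_add_le_one_add_mul_self (s := y / x - 1)
    (by linarith [div_nonneg hy hx.le]) hα0 hα1
  rw [add_sub_cancel, div_rpow hy hx.le, div_le_iff₀ (rpow_pos_of_pos hx α)] at bernoulli
  calc y ^ α ≤ (1 + α * (y / x - 1)) * x ^ α := bernoulli
    _ = x ^ α + α * (x ^ α / x) * (y - x) := by field_simp
    _ = x ^ α + α * x ^ (α - 1) * (y - x) := by rw [rpow_sub_one hx.ne']

end Real

noncomputable def negTsallis {ι : Type*} [Fintype ι] (α : ℝ) (p : ι → ℝ) : ℝ :=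
  -(1 / α) * ∑ i, (p i ^ α - p i)

section Simplex

variable {ι : Type*} [Fintype ι] {α : ℝ} {p q r : ι → ℝ}

theorem le_one_of_sum_eq_one (hp0 : ∀ i, 0 ≤ p i) (hp1 : ∑ i, p i = 1) (i : ι) : p i ≤ 1 :=
  hp1 ▸ single_le_sum (fun j _ ↦ hp0 j) (mem_univ i)

theorem one_le_sum_rpow (hα1 : α ≤ 1) (hp0 : ∀ i, 0 ≤ p i) (hp1 : ∑ i, p i = 1) :
    1 ≤ ∑ i, p i ^ α :=
  hp1 ▸ sum_le_sum fun i _ ↦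
    Real.self_le_rpow_of_le_one (hp0 i) (le_one_of_sum_eq_one hp0 hp1 i) hα1

theorem sum_rpow_sub_one_le {ω : ℝ} (hα0 : 0 ≤ α) (hα1 : α ≤ 1)
    (hq0 : ∀ i, 0 < q i) (hq1 : ∑ i, q i = 1) (hr0 : ∀ i, 0 ≤ r i) (hr1 : ∑ i, r i = 1)
    (hrq : ∀ i, r i ≤ ω * q i) :
    ∑ i, r i ^ α - 1 ≤ (1 + (ω - 1) * α) * (∑ i, q i ^ α - 1) := by
  have hq_le_one (i : ι) : q i ≤ 1 := le_one_of_sum_eq_one (fun j ↦ (hq0 j).le) hq1 i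
  have hgrad (i : ι) : 1 ≤ q i ^ (α - 1) :=
    Real.one_le_rpow_of_pos_of_le_one_of_nonpos (hq0 i) (hq_le_one i) (by linarith)
  have hmass : ∑ i, (r i - q i) = 0 := by rw [sum_sub_distrib, hq1, hr1, sub_self]
  have hpow (i : ι) : q i ^ (α - 1) * q i = q i ^ α := by
    rw [Real.rpow_sub_one (hq0 i).ne', div_mul_cancel₀ _ (hq0 i).ne']
  have htangent :
      ∑ i, r i ^ α ≤ ∑ i, q i ^ α + α * ∑ i, (q i ^ (α - 1) - 1) * (r i - q i) :=
    calc ∑ i, r i ^ α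
        ≤ ∑ i, (q i ^ α + α * q i ^ (α - 1) * (r i - q i)) :=
          sum_le_sum fun i _ ↦ Real.rpow_le_rpow_add_mul_sub hα0 hα1 (hq0 i) (hr0 i)
      _ = ∑ i, (q i ^ α + α * ((q i ^ (α - 1) - 1) * (r i - q i)) + α * (r i - q i)) :=
          sum_congr rfl fun i _ ↦ by ring
      _ = ∑ i, q i ^ α + α * ∑ i, (q i ^ (α - 1) - 1) * (r i - q i)
            + α * ∑ i, (r i - q i) := by
          rw [sum_add_distrib, sum_add_distrib, ← mul_sum, ← mul_sum]
      _ = _ := by rw [hmass, mul_zero, add_zero]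
  have hexcess : ∑ i, (q i ^ (α - 1) - 1) * (r i - q i) ≤ (ω - 1) * (∑ i, q i ^ α - 1) :=
    calc ∑ i, (q i ^ (α - 1) - 1) * (r i - q i)
        ≤ ∑ i, (q i ^ (α - 1) - 1) * ((ω - 1) * q i) :=
          sum_le_sum fun i _ ↦
            mul_le_mul_of_nonneg_left (by linarith [hrq i]) (by linarith [hgrad i])
      _ = ∑ i, (ω - 1) * (q i ^ α - q i) := sum_congr rfl fun i _ ↦ by rw [← hpow]; ring
      _ = (ω - 1) * (∑ i, q i ^ α - 1) := by rw [← mul_sum, sum_sub_distrib, hq1]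
  linarith [mul_le_mul_of_nonneg_left hexcess hα0]


theorem negTsallis_eq_of_sum_eq_one (hp1 : ∑ i, p i = 1) :
    negTsallis α p = -((∑ i, p i ^ α - 1) / α) := by
  rw [negTsallis, sum_sub_distrib, hp1]
  ring

theorem negTsallis_nonpos (hα0 : 0 < α) (hα1 : α ≤ 1) (hp0 : ∀ i, 0 ≤ p i)
    (hp1 : ∑ i, p i = 1) : negTsallis α p ≤ 0 := by
  rw [negTsallis_eq_of_sum_eq_one hp1, neg_nonpos]
  exact div_nonneg (sub_nonneg.2 (one_le_sum_rpow hα1 hp0 hp1)) hα0.le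

theorem mul_negTsallis_le_negTsallis {ω : ℝ} (hα0 : 0 < α) (hα1 : α ≤ 1)
    (hq0 : ∀ i, 0 < q i) (hq1 : ∑ i, q i = 1) (hr0 : ∀ i, 0 ≤ r i) (hr1 : ∑ i, r i = 1)
    (hrq : ∀ i, r i ≤ ω * q i) :
    (1 + (ω - 1) * α) * negTsallis α q ≤ negTsallis α r := by
  rw [negTsallis_eq_of_sum_eq_one hq1, negTsallis_eq_of_sum_eq_one hr1, mul_neg, neg_le_neg_iff,
    ← mul_div_assoc]
  exact div_le_div_of_nonneg_right (sum_rpow_sub_one_le hα0.le hα1 hq0 hq1 hr0 hr1 hrq) hα0.le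

end Simplex

/-- If `r i ≤ ω * q i` for all `i`, then `-ψ(r) ≤ -(1 + (ω-1)α) ψ(q) ≤ -ω ψ(q)`,
where `ψ` is the negative α-Tsallis entropy on the simplex. -/
theorem stmt10 (K : ℕ) (α ω : ℝ) (hα : α ∈ Set.Ioo (0 : ℝ) 1) (hω : 1 < ω)
    (q r : Fin K → ℝ)
    (hq0 : ∀ i, 0 < q i) (hq1 : ∑ i, q i = 1)
    (hr0 : ∀ i, 0 ≤ r i) (hr1 : ∑ i, r i = 1)
    (hrq : ∀ i, r i ≤ ω * q i)
    (ψ : (Fin K → ℝ) → ℝ)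
    (hψ : ∀ p, ψ p = -(1 / α) * ∑ i, ((p i) ^ α - p i)) :
    -ψ r ≤ -((1 + (ω - 1) * α) * ψ q) ∧ -((1 + (ω - 1) * α) * ψ q) ≤ -(ω * ψ q) := by
  obtain ⟨hα0, hα1⟩ := hα
  obtain rfl : ψ = negTsallis α := funext hψ
  have hcoeff : 1 + (ω - 1) * α ≤ ω := by nlinarith
  exact ⟨neg_le_neg (mul_negTsallis_le_negTsallis hα0 hα1.le hq0 hq1 hr0 hr1 hrq),
    neg_le_neg (mul_le_mul_of_nonpos_right hcoeff
      (negTsallis_nonpos hα0 hα1.le (fun i ↦ (hq0 i).le) hq1))⟩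
end

section
/- Let h_1 ≥ h_2 ≥ ... ≥ h_{T+1} > 0 and z_1,...,z_T ∈ [0, z_max]. Define for j ≥ 1, θ_j = h_1·2^{−j}, θ_0 = h_1, T_j = {t ∈ [T] : θ_{j-1} ≥ h_t > θ_j}, T'_j = {t ∈ [T] : θ_{j-1} ≥ h_{t+1} > θ_j}, and H(z; h_{1:T}) = Σ_{j=1}^∞ sqrt(θ_{j-1}·Σ_{t ∈ T_j} z_t), H(z; h_{2:T+1}) = Σ_{j=1}^∞ sqrt(θ_{j-1}·Σ_{t ∈ T'_j} z_t). Then H(z; h_{1:T}) ≤ H(z; h_{2:T+1}) + 4·sqrt(h_1·z_max). -/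
/-!
Since `h` is non-increasing, the `j`-th dyadic level set of `h_{1:T}` and that of the shifted
sequence `h_{2:T+1}` differ by at most one index lying only in the former: the last `t` with
`h_t > θ_{j+1}`. So the inner sums at level `j` differ by at most `z_max`, and subadditivity of
`√` bounds the difference of the `j`-th terms by `√(θ_j z_max)`. These errors form a geometric
series of ratio `1/√2`, whose sum `(2 + √2) √(h_1 z_max)` is at most `4 √(h_1 z_max)`.
-/

open Finset

lemma Real.sqrt_add_le (x y : ℝ) : √(x + y) ≤ √x + √y := by
  rcases lt_or_ge x 0 with hx | hx
  · exact (Real.sqrt_le_sqrt (by linarith)).trans (le_add_of_nonneg_left (Real.sqrt_nonneg x))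
  rcases lt_or_ge y 0 with hy | hy
  · exact (Real.sqrt_le_sqrt (by linarith)).trans (le_add_of_nonneg_right (Real.sqrt_nonneg y))
  rw [Real.sqrt_le_left (by positivity)]
  nlinarith [Real.sq_sqrt hx, Real.sq_sqrt hy, Real.sqrt_nonneg x, Real.sqrt_nonneg y]

lemma Real.sqrt_mul_two_zpow_neg (c : ℝ) (j : ℕ) :
    √(c * 2 ^ (-(j : ℤ))) = √c * (√2)⁻¹ ^ j := by
  have : (2 : ℝ) ^ (-(j : ℤ)) = ((√2)⁻¹ ^ j) ^ 2 := by
    rw [← pow_mul, mul_comm, pow_mul, inv_pow, Real.sq_sqrt zero_le_two, zpow_neg, zpow_natCast,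
      inv_pow]
  rw [this, Real.sqrt_mul' _ (sq_nonneg _), Real.sqrt_sq (by positivity)]

lemma Real.inv_sqrt_two_lt_one : (√2)⁻¹ < 1 := inv_lt_one_of_one_lt₀ Real.one_lt_sqrt_two

lemma summable_sqrt_mul_two_zpow_neg (c : ℝ) :
    Summable fun j : ℕ => √(c * 2 ^ (-(j : ℤ))) := by
  simp_rw [Real.sqrt_mul_two_zpow_neg]
  exact (summable_geometric_of_lt_one (by positivity) Real.inv_sqrt_two_lt_one).mul_left _

lemma tsum_sqrt_mul_two_zpow_neg_le (c : ℝ) :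
    ∑' j : ℕ, √(c * 2 ^ (-(j : ℤ))) ≤ 4 * √c := by
  simp_rw [Real.sqrt_mul_two_zpow_neg, tsum_mul_left,
    tsum_geometric_of_lt_one (by positivity) Real.inv_sqrt_two_lt_one, mul_comm (4 : ℝ)]
  gcongr
  have h43 : (4 / 3 : ℝ) ≤ √2 := Real.le_sqrt_of_sq_le (by norm_num)
  rw [inv_le_comm₀ (sub_pos.2 Real.inv_sqrt_two_lt_one) four_pos, le_sub_comm,
    inv_le_comm₀ (by positivity) (by positivity)]
  linarith

lemma summable_sqrt_mul_two_zpow_neg_mul {a C : ℝ} {S : ℕ → ℝ} (ha : 0 ≤ a)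
    (hS : ∀ j, S j ≤ C) : Summable fun j : ℕ => √(a * 2 ^ (-(j : ℤ)) * S j) := by
  refine (summable_sqrt_mul_two_zpow_neg (a * C)).of_nonneg_of_le (fun _ => Real.sqrt_nonneg _)
    fun j => Real.sqrt_le_sqrt ?_
  rw [mul_right_comm]
  have := hS j
  gcongr

theorem tsum_sqrt_mul_two_zpow_neg_le_tsum_add {a C e : ℝ} {S S' : ℕ → ℝ} (ha : 0 ≤ a)
    (hS'C : ∀ j, S' j ≤ C) (hSS' : ∀ j, S j ≤ S' j + e) :
    ∑' j : ℕ, √(a * 2 ^ (-(j : ℤ)) * S j) ≤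
      ∑' j : ℕ, √(a * 2 ^ (-(j : ℤ)) * S' j) + 4 * √(a * e) := by
  have hterm : ∀ j : ℕ, √(a * 2 ^ (-(j : ℤ)) * S j) ≤
      √(a * 2 ^ (-(j : ℤ)) * S' j) + √(a * e * 2 ^ (-(j : ℤ))) := by
    intro j
    calc √(a * 2 ^ (-(j : ℤ)) * S j)
        ≤ √(a * 2 ^ (-(j : ℤ)) * S' j + a * e * 2 ^ (-(j : ℤ))) := by
          apply Real.sqrt_le_sqrt
          have := hSS' j
          have : a * e * 2 ^ (-(j : ℤ)) = a * 2 ^ (-(j : ℤ)) * e := by ring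
          rw [this, ← mul_add]
          gcongr
      _ ≤ _ := Real.sqrt_add_le _ _
  have hS' := summable_sqrt_mul_two_zpow_neg_mul ha hS'C
  have he := summable_sqrt_mul_two_zpow_neg (a * e)
  calc ∑' j : ℕ, √(a * 2 ^ (-(j : ℤ)) * S j)
      ≤ ∑' j : ℕ, (√(a * 2 ^ (-(j : ℤ)) * S' j) + √(a * e * 2 ^ (-(j : ℤ)))) :=
        (summable_sqrt_mul_two_zpow_neg_mul ha fun j =>
          (hSS' j).trans (add_le_add (hS'C j) le_rfl)).tsum_le_tsum hterm (hS'.add he)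
    _ = ∑' j : ℕ, √(a * 2 ^ (-(j : ℤ)) * S' j) +
          ∑' j : ℕ, √(a * e * 2 ^ (-(j : ℤ))) :=
        hS'.tsum_add he
    _ ≤ _ := by gcongr; exact tsum_sqrt_mul_two_zpow_neg_le _

lemma Finset.sum_le_sum_add_of_card_sdiff_le_one {ι M : Type*} [DecidableEq ι] [AddCommMonoid M]
    [PartialOrder M] [IsOrderedAddMonoid M] {s t : Finset ι} {f : ι → M} {b : M}
    (ht : ∀ i ∈ t, i ∉ s → 0 ≤ f i) (hs : ∀ i ∈ s, f i ≤ b) (hb : 0 ≤ b)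
    (hcard : #(s \ t) ≤ 1) : ∑ i ∈ s, f i ≤ ∑ i ∈ t, f i + b := by
  rw [← sum_inter_add_sum_sdiff s t]
  refine add_le_add ?_ ?_
  · exact sum_le_sum_of_subset_of_nonneg inter_subset_right fun i hi his =>
      ht i hi fun hs => his (mem_inter.2 ⟨hs, hi⟩)
  · calc ∑ i ∈ s \ t, f i ≤ #(s \ t) • b :=
          sum_le_card_nsmul _ _ _ fun i hi => hs i (mem_sdiff.1 hi).1
      _ ≤ 1 • b := nsmul_le_nsmul_left hb hcard
      _ = b := one_nsmul b

section Antitone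

variable {α : Type*} [LinearOrder α] {h : ℕ → α} {m n : ℕ}

lemma card_filter_lt_and_succ_le_le_one (hh : AntitoneOn h (Set.Icc m (n + 1))) (a : α) :
    #{t ∈ Icc m n | a < h t ∧ h (t + 1) ≤ a} ≤ 1 := by
  rw [card_le_one]
  have crossing_unique :
      ∀ t ∈ Icc m n, ∀ u ∈ Icc m n, a < h u → h (t + 1) ≤ a → ¬t < u := by
    intro t ht u hu hua ht1 htu
    rw [mem_Icc] at ht hu
    have hut : h u ≤ h (t + 1) := hh ⟨by omega, by omega⟩ ⟨by omega, by omega⟩ htu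
    exact (hua.trans_le (hut.trans ht1)).false
  intro t ht u hu
  simp only [mem_filter] at ht hu
  have := crossing_unique t ht.1 u hu.1 hu.2.1 ht.2.2
  have := crossing_unique u hu.1 t ht.1 ht.2.1 hu.2.2
  omega

lemma card_filter_sdiff_filter_succ_le_one (hh : AntitoneOn h (Set.Icc m (n + 1))) (a b : α) :
    #({t ∈ Icc m n | h t ≤ b ∧ a < h t} \
      {t ∈ Icc m n | h (t + 1) ≤ b ∧ a < h (t + 1)}) ≤ 1 := by
  refine (card_le_card fun t ht => ?_).trans (card_filter_lt_and_succ_le_le_one hh a)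
  simp only [mem_sdiff, mem_filter, not_and, not_lt] at ht ⊢
  obtain ⟨⟨htI, htb, hat⟩, hnot⟩ := ht
  have hI := mem_Icc.1 htI
  have hsucc : h (t + 1) ≤ h t := hh ⟨hI.1, by omega⟩ ⟨by omega, by omega⟩ (by omega)
  exact ⟨htI, hat, hnot htI (hsucc.trans htb)⟩

end Antitone

/-- Shift bound for the dyadic quantity `H`:
`H(z; h_{1:T}) ≤ H(z; h_{2:T+1}) + 4 √(h 1 · z_max)` for non-increasing positive `h`. -/
theorem stmt16 (T : ℕ) (z h : ℕ → ℝ) (zmax : ℝ)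
    (hz : ∀ t, 1 ≤ t → t ≤ T → 0 ≤ z t)
    (hzmax : ∀ t, 1 ≤ t → t ≤ T → z t ≤ zmax)
    (hpos : ∀ t, 1 ≤ t → t ≤ T + 1 → 0 < h t)
    (hmono : ∀ t, 1 ≤ t → t ≤ T → h (t + 1) ≤ h t) :
    (∑' j : ℕ, Real.sqrt (h 1 * (2 : ℝ) ^ (-(j : ℤ)) *
        ∑ t ∈ (Finset.Icc 1 T).filter
          (fun t => h t ≤ h 1 * (2 : ℝ) ^ (-(j : ℤ)) ∧
            h 1 * (2 : ℝ) ^ (-((j : ℤ) + 1)) < h t), z t))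
      ≤ (∑' j : ℕ, Real.sqrt (h 1 * (2 : ℝ) ^ (-(j : ℤ)) *
          ∑ t ∈ (Finset.Icc 1 T).filter
            (fun t => h (t + 1) ≤ h 1 * (2 : ℝ) ^ (-(j : ℤ)) ∧
              h 1 * (2 : ℝ) ^ (-((j : ℤ) + 1)) < h (t + 1)), z t))
        + 4 * Real.sqrt (h 1 * zmax) := by
  obtain rfl | hT := T.eq_zero_or_pos
  · simp
  have hz' (t) (ht : t ∈ Icc 1 T) : 0 ≤ z t := hz t (mem_Icc.1 ht).1 (mem_Icc.1 ht).2
  have hzmax' (t) (ht : t ∈ Icc 1 T) : z t ≤ zmax := hzmax t (mem_Icc.1 ht).1 (mem_Icc.1 ht).2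
  have hzmax_nonneg : 0 ≤ zmax := (hz 1 le_rfl hT).trans (hzmax 1 le_rfl hT)
  have hanti : AntitoneOn h (Set.Icc 1 (T + 1)) :=
    antitoneOn_of_succ_le Set.ordConnected_Icc fun t _ ht ht1 =>
      hmono t ht.1 (by simpa using ht1.2)
  refine tsum_sqrt_mul_two_zpow_neg_le_tsum_add (hpos 1 le_rfl (by omega)).le
    (fun j => sum_le_sum_of_subset_of_nonneg (filter_subset _ _) fun t ht _ => hz' t ht)
    fun j => sum_le_sum_add_of_card_sdiff_le_one (fun t ht _ => hz' t (mem_filter.1 ht).1)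
      (fun t ht => hzmax' t (mem_filter.1 ht).1) hzmax_nonneg
      (card_filter_sdiff_filter_succ_le_one hanti _ _)
end

section
/- Let z_1,...,z_T ≥ 0 and h_1,...,h_T > 0 with h_max = max_t h_t and z_max = max_t z_t. Define G(z,h) = Σ_{t=1}^T z_t·(Σ_{s=1}^t z_s/h_s)^{-1/2}. Then for every J ∈ ℕ, G(z,h) ≤ sqrt(8·J·Σ_{t=1}^T h_t·z_t) + 2·sqrt(2^{−J}·T·h_max·z_max). -/
/-!
Let `Z t = ∑_{s ≤ t} z s / h s`. On a set `F` of indices with `h ≤ θ` we have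
`Z t ≥ θ⁻¹ ∑_{s ∈ F, s ≤ t} z s`, and the telescoping estimate `a / √(a + b) ≤ 2 (√(a + b) - √b)`
bounds the part of the sum over `F` by `2 √(θ ∑_F z)`. Split the indices into the dyadic bands
`h_max / 2^(j+1) < h t ≤ h_max / 2^j`, `j < J`, and the tail `h t ≤ h_max / 2^J`. On a band
`θ ≤ 2 h t`, so its part is at most `√(8 ∑_F h z)`, and Cauchy–Schwarz over the `J` bands gives
the first term; on the tail `∑ z ≤ T z_max` gives the second.
-/

open Finset

lemma div_sqrt_add_add_two_sqrt_le {a b : ℝ} (ha : 0 ≤ a) (hb : 0 ≤ b) :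
    a / √(a + b) + 2 * √b ≤ 2 * √(a + b) := by
  rcases (add_nonneg ha hb).eq_or_lt with h0 | h0
  · simp [show b = 0 by linarith, show a = 0 by linarith]
  have hs : 0 < √(a + b) := Real.sqrt_pos.2 h0
  rw [div_add' _ _ _ hs.ne', div_le_iff₀ hs]
  have amgm : 2 * √b * √(a + b) ≤ b + (a + b) := by
    simpa [Real.sq_sqrt hb, Real.sq_sqrt h0.le] using two_mul_le_add_sq √b √(a + b)
  nlinarith [Real.mul_self_sqrt h0.le]

theorem sum_div_sqrt_le_two_sqrt_sum {ι : Type*} [LinearOrder ι] (F : Finset ι) {w D : ι → ℝ}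
    (hw : ∀ t ∈ F, 0 ≤ w t) (hD : ∀ t ∈ F, ∑ s ∈ F with s ≤ t, w s ≤ D t) :
    ∑ t ∈ F, w t / √(D t) ≤ 2 * √(∑ t ∈ F, w t) := by
  induction F using Finset.induction_on_max with
  | empty => simp
  | insert a F hlt ih =>
    have ha : a ∉ F := fun haF => (hlt a haF).false
    have hwa : 0 ≤ w a := hw a (mem_insert_self a F)
    have hwF : ∀ t ∈ F, 0 ≤ w t := fun t ht => hw t (mem_insert_of_mem ht)
    have hDF : ∀ t ∈ F, ∑ s ∈ F with s ≤ t, w s ≤ D t := by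
      intro t ht
      have hprefix : ({s ∈ insert a F | s ≤ t} : Finset ι) = {s ∈ F | s ≤ t} := by
        rw [filter_insert, if_neg (hlt t ht).not_ge]
      simpa [hprefix] using hD t (mem_insert_of_mem ht)
    have hDa : w a + ∑ t ∈ F, w t ≤ D a := by
      have := hD a (mem_insert_self a F)
      rwa [filter_true_of_mem fun s hs => (mem_insert.1 hs).elim le_of_eq fun hsF => (hlt s hsF).le,
        sum_insert ha] at this
    have hterm : w a / √(D a) ≤ w a / √(w a + ∑ t ∈ F, w t) := by
      rcases hwa.eq_or_lt with h0 | h0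
      · simp [← h0]
      · exact div_le_div_of_nonneg_left hwa
          (Real.sqrt_pos.2 (add_pos_of_pos_of_nonneg h0 (sum_nonneg hwF))) (Real.sqrt_le_sqrt hDa)
    rw [sum_insert ha, sum_insert ha]
    linarith [ih hwF hDF, div_sqrt_add_add_two_sqrt_le hwa (sum_nonneg hwF)]

theorem sum_div_sqrt_prefix_le_of_le {ι : Type*} [LinearOrder ι] {S F : Finset ι} (hFS : F ⊆ S)
    {z h : ι → ℝ} (hz : ∀ t ∈ S, 0 ≤ z t) (hh : ∀ t ∈ S, 0 < h t) {θ : ℝ} (hθ : 0 < θ)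
    (hhθ : ∀ t ∈ F, h t ≤ θ) :
    ∑ t ∈ F, z t / √(∑ s ∈ S with s ≤ t, z s / h s) ≤ 2 * √(θ * ∑ t ∈ F, z t) := by
  have hzF : ∀ t ∈ F, 0 ≤ z t := fun t ht => hz t (hFS ht)
  have hD : ∀ t ∈ F, ∑ s ∈ F with s ≤ t, z s ≤ θ * ∑ s ∈ S with s ≤ t, z s / h s := by
    intro t _
    calc ∑ s ∈ F with s ≤ t, z s = θ * ∑ s ∈ F with s ≤ t, z s / θ := by
          rw [mul_sum]; congr! 1 with s; field_simp
      _ ≤ θ * ∑ s ∈ F with s ≤ t, z s / h s := by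
          gcongr with s hs
          · exact hzF s (mem_filter.1 hs).1
          · exact hh s (hFS (mem_filter.1 hs).1)
          · exact hhθ s (mem_filter.1 hs).1
      _ ≤ θ * ∑ s ∈ S with s ≤ t, z s / h s := by
          gcongr
          exact fun s hs _ => div_nonneg (hz s (mem_filter.1 hs).1) (hh s (mem_filter.1 hs).1).le
  have hsθ : √θ ≠ 0 := (Real.sqrt_pos.2 hθ).ne'
  calc ∑ t ∈ F, z t / √(∑ s ∈ S with s ≤ t, z s / h s)
      = √θ * ∑ t ∈ F, z t / √(θ * ∑ s ∈ S with s ≤ t, z s / h s) := by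
        rw [mul_sum]; congr! 1 with t
        rw [Real.sqrt_mul hθ.le, mul_div_assoc', mul_div_mul_left _ _ hsθ]
    _ ≤ √θ * (2 * √(∑ t ∈ F, z t)) := by gcongr; exact sum_div_sqrt_le_two_sqrt_sum F hzF hD
    _ = 2 * √(θ * ∑ t ∈ F, z t) := by rw [Real.sqrt_mul hθ.le]; ring

lemma sum_sqrt_le_sqrt_card_mul_sum {ι : Type*} (s : Finset ι) {a : ι → ℝ}
    (ha : ∀ i ∈ s, 0 ≤ a i) : ∑ i ∈ s, √(a i) ≤ √(#s * ∑ i ∈ s, a i) := by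
  have hcs := Real.sum_mul_le_sqrt_mul_sqrt s 1 fun i => √(a i)
  rw [sum_congr rfl fun i hi => Real.sq_sqrt (ha i hi)] at hcs
  simpa [Real.sqrt_mul] using hcs

section LevelBand

variable {ι : Type*} (S : Finset ι) (h : ι → ℝ) {θ : ℕ → ℝ}

noncomputable def levelBand (θ : ℕ → ℝ) (j : ℕ) : Finset ι :=
  {t ∈ S | θ (j + 1) < h t ∧ h t ≤ θ j}

theorem sum_filter_le_eq_sum_levelBand_add {β : Type*} [AddCommMonoid β] (hθ : Antitone θ)
    (f : ι → β) (K : ℕ) :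
    ∑ t ∈ S with h t ≤ θ 0, f t
      = ∑ j ∈ range K, ∑ t ∈ levelBand S h θ j, f t + ∑ t ∈ S with h t ≤ θ K, f t := by
  induction K with
  | zero => simp
  | succ K ih =>
    have hsplit : ∑ t ∈ S with h t ≤ θ K, f t
        = ∑ t ∈ levelBand S h θ K, f t + ∑ t ∈ S with h t ≤ θ (K + 1), f t := by
      rw [← sum_filter_add_sum_filter_not _ fun t => θ (K + 1) < h t, filter_filter,
        filter_filter, levelBand]
      congr 1
      · exact sum_congr (filter_congr fun _ _ => and_comm) fun _ _ => rfl
      · refine sum_congr (filter_congr fun t _ => ?_) fun _ _ => rfl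
        exact ⟨fun ht => not_lt.1 ht.2, fun h' => ⟨h'.trans (hθ K.le_succ), not_lt.2 h'⟩⟩
    rw [ih, hsplit, sum_range_succ, add_assoc]

theorem pairwise_disjoint_levelBand (hθ : Antitone θ) :
    Pairwise (Function.onFun Disjoint (levelBand S h θ)) := by
  refine (pairwise_disjoint_on _).2 fun i j hij => disjoint_left.2 fun t hti htj => ?_
  have hi := (mem_filter.1 hti).2.1
  have hj := (mem_filter.1 htj).2.2
  linarith [hθ (Nat.succ_le_of_lt hij)]

theorem sum_sum_levelBand_le (hθ : Antitone θ) {f : ι → ℝ} (hf : ∀ t ∈ S, 0 ≤ f t) (K : ℕ) :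
    ∑ j ∈ range K, ∑ t ∈ levelBand S h θ j, f t ≤ ∑ t ∈ S, f t := by
  classical
  rw [← sum_biUnion ((pairwise_disjoint_levelBand S h hθ).set_pairwise _)]
  exact sum_le_sum_of_subset_of_nonneg (biUnion_subset.2 fun _ _ => filter_subset _ _)
    fun t ht _ => hf t ht

theorem sum_levelBand_div_sqrt_prefix_le [LinearOrder ι] {z : ι → ℝ} (hz : ∀ t ∈ S, 0 ≤ z t)
    (hh : ∀ t ∈ S, 0 < h t) {j : ℕ} (hθj : 0 < θ j) (hθ2 : θ j ≤ 2 * θ (j + 1)) :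
    ∑ t ∈ levelBand S h θ j, z t / √(∑ s ∈ S with s ≤ t, z s / h s)
      ≤ √(8 * ∑ t ∈ levelBand S h θ j, h t * z t) := by
  refine (sum_div_sqrt_prefix_le_of_le (filter_subset _ _) hz hh hθj
    fun t ht => (mem_filter.1 ht).2.2).trans ?_
  have hband : θ j * ∑ t ∈ levelBand S h θ j, z t ≤ 2 * ∑ t ∈ levelBand S h θ j, h t * z t := by
    rw [mul_sum, mul_sum]
    refine sum_le_sum fun t ht => ?_
    obtain ⟨htS, hlow, -⟩ := mem_filter.1 ht
    nlinarith [hz t htS]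
  calc 2 * √(θ j * ∑ t ∈ levelBand S h θ j, z t)
      = √(4 * (θ j * ∑ t ∈ levelBand S h θ j, z t)) := by
        rw [Real.sqrt_mul zero_le_four]; norm_num
    _ ≤ √(8 * ∑ t ∈ levelBand S h θ j, h t * z t) := Real.sqrt_le_sqrt (by linarith)

end LevelBand

theorem sum_div_sqrt_prefix_le_dyadic {ι : Type*} [LinearOrder ι] (S : Finset ι) {z h : ι → ℝ}
    (hz : ∀ t ∈ S, 0 ≤ z t) (hh : ∀ t ∈ S, 0 < h t) {c : ℝ} (hc : 0 < c)
    (hhc : ∀ t ∈ S, h t ≤ c) (J : ℕ) :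
    ∑ t ∈ S, z t / √(∑ s ∈ S with s ≤ t, z s / h s)
      ≤ √(8 * J * ∑ t ∈ S, h t * z t) + 2 * √(c / 2 ^ J * ∑ t ∈ S, z t) := by
  set θ : ℕ → ℝ := fun j => c / 2 ^ j
  have hθ : Antitone θ := fun i j hij =>
    div_le_div_of_nonneg_left hc.le (by positivity) (pow_le_pow_right₀ one_le_two hij)
  have hθ2 (j : ℕ) : θ j ≤ 2 * θ (j + 1) :=
    (by simp only [θ, pow_succ]; field_simp : θ j = 2 * θ (j + 1)).le
  have hhz : ∀ t ∈ S, 0 ≤ h t * z t := fun t ht => mul_nonneg (hh t ht).le (hz t ht)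
  have hS : ({t ∈ S | h t ≤ θ 0} : Finset ι) = S :=
    filter_true_of_mem fun t ht => by simpa [θ] using hhc t ht
  calc ∑ t ∈ S, z t / √(∑ s ∈ S with s ≤ t, z s / h s)
      = ∑ j ∈ range J, ∑ t ∈ levelBand S h θ j, z t / √(∑ s ∈ S with s ≤ t, z s / h s)
        + ∑ t ∈ S with h t ≤ θ J, z t / √(∑ s ∈ S with s ≤ t, z s / h s) := by
        rw [← sum_filter_le_eq_sum_levelBand_add S h hθ, hS]
    _ ≤ ∑ j ∈ range J, √(8 * ∑ t ∈ levelBand S h θ j, h t * z t)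
        + 2 * √(θ J * ∑ t ∈ S with h t ≤ θ J, z t) := by
        gcongr with j
        · exact sum_levelBand_div_sqrt_prefix_le S h hz hh (by positivity) (hθ2 j)
        · exact sum_div_sqrt_prefix_le_of_le (filter_subset _ _) hz hh (by positivity)
            fun t ht => (mem_filter.1 ht).2
    _ ≤ √(J * ∑ j ∈ range J, 8 * ∑ t ∈ levelBand S h θ j, h t * z t)
        + 2 * √(θ J * ∑ t ∈ S, z t) := by
        gcongr ?_ + 2 * √(_ * ?_)
        · simpa only [card_range] using sum_sqrt_le_sqrt_card_mul_sum (range J)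
            (a := fun j => 8 * ∑ t ∈ levelBand S h θ j, h t * z t)
            fun j _ => mul_nonneg (by norm_num) (sum_nonneg fun t ht => hhz t (mem_filter.1 ht).1)
        · exact sum_le_sum_of_subset_of_nonneg (filter_subset _ _) fun t ht _ => hz t ht
    _ ≤ √(8 * J * ∑ t ∈ S, h t * z t) + 2 * √(c / 2 ^ J * ∑ t ∈ S, z t) := by
        rw [← mul_sum, ← mul_assoc, mul_comm (J : ℝ)]
        gcongr
        exact sum_sum_levelBand_le S h hθ hhz J

/-- Dyadic bound on `G`: for every `J`,
`G(z,h) ≤ sqrt (8 J ∑ h t z t) + 2 sqrt (2^{-J} T h_max z_max)`. -/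
theorem stmt17 (T : ℕ) (z h : ℕ → ℝ) (hmax zmax : ℝ)
    (hz : ∀ t, 1 ≤ t → t ≤ T → 0 ≤ z t)
    (hh : ∀ t, 1 ≤ t → t ≤ T → 0 < h t)
    (hhmax : ∀ t, 1 ≤ t → t ≤ T → h t ≤ hmax)
    (hzmax : ∀ t, 1 ≤ t → t ≤ T → z t ≤ zmax) :
    ∀ J : ℕ,
      (∑ t ∈ Finset.Icc 1 T, z t / Real.sqrt (∑ s ∈ Finset.Icc 1 t, z s / h s))
        ≤ Real.sqrt (8 * (J : ℝ) * ∑ t ∈ Finset.Icc 1 T, h t * z t)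
          + 2 * Real.sqrt ((2 : ℝ) ^ (-(J : ℤ)) * (T : ℝ) * hmax * zmax) := by
  intro J
  rcases Nat.eq_zero_or_pos T with rfl | hT
  · simp only [Icc_eq_empty_of_lt zero_lt_one, sum_empty]
    positivity
  have hmax0 : 0 < hmax := (hh 1 le_rfl hT).trans_le (hhmax 1 le_rfl hT)
  have hprefix (t : ℕ) (ht : t ∈ Icc 1 T) : Icc 1 t = {s ∈ Icc 1 T | s ≤ t} := by
    ext s; simp only [mem_Icc, mem_filter] at ht ⊢; omega
  have hIcc {P : ℕ → Prop} (hP : ∀ t, 1 ≤ t → t ≤ T → P t) : ∀ t ∈ Icc 1 T, P t :=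
    fun t ht => hP t (mem_Icc.1 ht).1 (mem_Icc.1 ht).2
  have hzsum : ∑ t ∈ Icc 1 T, z t ≤ T * zmax := by
    simpa using sum_le_card_nsmul _ _ _ (hIcc hzmax)
  rw [sum_congr rfl fun t ht => by rw [hprefix t ht]]
  refine (sum_div_sqrt_prefix_le_dyadic (Icc 1 T) (hIcc hz) (hIcc hh) hmax0 (hIcc hhmax) J).trans ?_
  gcongr _ + 2 * √?_
  calc hmax / 2 ^ J * ∑ t ∈ Icc 1 T, z t ≤ hmax / 2 ^ J * (T * zmax) := by gcongr
    _ = (2 : ℝ) ^ (-(J : ℤ)) * T * hmax * zmax := by rw [zpow_neg, zpow_natCast]; ring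
end

section
/- Let α ∈ (0,1), ξ ≥ 1, z_1,...,z_T ≥ 0, and let h_1,...,h_T > 0 be ξ-approximately non-increasing (ξ·h_{t'} ≥ h_t for t' < t). Then G(z_{1:T}, h_{1:T}) ≤ 2·sqrt(ξ)·F*(z_{1:T}, h_{1:T}), where G(z,h) = Σ_{t=1}^T z_t·(Σ_{s=1}^t z_s/h_s)^{-1/2} and F*(z,h) = inf { Σ_{t=1}^T ( z_t/β_t + (β_t − β_{t-1})·h_t ) : 0 < β_1 ≤ ... ≤ β_T, β_0 = 0 }. -/
/-!
Replace `h` by its running minimum `H`, which is non-increasing with `H ≤ h ≤ ξ H`; this costs a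
factor `√ξ` in `G` and can only lower the cost of each `β`. For non-increasing `H`, write
`S t = ∑_{s ≤ t} z s / H s`, so that `z t = H t (S t - S (t-1))` and
`z t / √(S t) ≤ 2 H t (√(S t) - √(S (t-1)))`. Against a fixed admissible `β`, each increment
`√(S t) - √(S (t-1))` is paid for by `z t / β t + (β t - β (t-1))` up to the telescoping change
of the nonnegative potential `S t / β t - √(S t) + β t`, and since `H` is non-increasing the
weighted telescoping sum is nonnegative.
-/

open Finset

namespace ApproxNonincreasing

noncomputable def G (z h : ℕ → ℝ) (T : ℕ) : ℝ :=
  ∑ t ∈ Icc 1 T, z t / √(∑ s ∈ Icc 1 t, z s / h s)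

noncomputable def F (z h β : ℕ → ℝ) (T : ℕ) : ℝ :=
  ∑ t ∈ Icc 1 T, (z t / β t + (β t - β (t - 1)) * h t)

/-- The value at `0` is `h 1`, so that `runningMin h t = min_{1 ≤ s ≤ t} h s` for `t ≥ 1`. -/
def runningMin (h : ℕ → ℝ) : ℕ → ℝ
  | 0 => h 1
  | t + 1 => min (runningMin h t) (h (t + 1))

section RunningMin

variable (h : ℕ → ℝ)

theorem runningMin_antitone : Antitone (runningMin h) :=
  antitone_nat_of_succ_le fun _ => min_le_left _ _

theorem runningMin_le {t : ℕ} (ht : 1 ≤ t) : runningMin h t ≤ h t := by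
  cases t with
  | zero => omega
  | succ t => exact min_le_right _ _

theorem exists_runningMin_eq {t : ℕ} (ht : 1 ≤ t) : ∃ s ∈ Icc 1 t, runningMin h t = h s := by
  induction t with
  | zero => omega
  | succ t ih =>
    rcases Nat.eq_zero_or_pos t with rfl | ht
    · exact ⟨1, by simp, min_self _⟩
    obtain ⟨s, hs, hs_eq⟩ := ih ht
    rw [mem_Icc] at hs
    rcases le_total (runningMin h t) (h (t + 1)) with hle | hle
    · exact ⟨s, mem_Icc.2 ⟨hs.1, by omega⟩, (min_eq_left hle).trans hs_eq⟩
    · exact ⟨t + 1, mem_Icc.2 ⟨by omega, le_rfl⟩, min_eq_right hle⟩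

variable {T : ℕ}

theorem runningMin_pos (hh : ∀ t ∈ Icc 1 T, 0 < h t) : ∀ t ∈ Icc 1 T, 0 < runningMin h t := fun t ht => by
  obtain ⟨s, hs, hs_eq⟩ := exists_runningMin_eq h (mem_Icc.1 ht).1
  exact hs_eq ▸ hh s (by grind)

theorem le_mul_runningMin (hh : ∀ t ∈ Icc 1 T, 0 < h t) {ξ : ℝ} (hξ : 1 ≤ ξ)
    (happrox : ∀ t' t, 1 ≤ t' → t' < t → t ≤ T → h t ≤ ξ * h t') :
    ∀ t ∈ Icc 1 T, h t ≤ ξ * runningMin h t := fun t ht => by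
  obtain ⟨s, hs, hs_eq⟩ := exists_runningMin_eq h (mem_Icc.1 ht).1
  rw [hs_eq]
  rcases (mem_Icc.1 hs).2.eq_or_lt with rfl | hst
  · exact le_mul_of_one_le_left (hh s ht).le hξ
  · exact happrox s t (mem_Icc.1 hs).1 hst (mem_Icc.1 ht).2

end RunningMin

theorem sum_Icc_one_eq_sum_Icc_one_pred_add {M : Type*} [AddCommMonoid M] (f : ℕ → M) {t : ℕ} (ht : 1 ≤ t) :
    ∑ s ∈ Icc 1 t, f s = ∑ s ∈ Icc 1 (t - 1), f s + f t := by
  obtain ⟨t, rfl⟩ := Nat.exists_eq_add_of_le' ht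
  exact sum_Icc_succ_top (by omega) f

theorem sub_div_sqrt_le_two_mul_sqrt_sub {a b : ℝ} (ha : 0 ≤ a) (hab : a ≤ b) :
    (b - a) / √b ≤ 2 * (√b - √a) := by
  have hsqrt := Real.sqrt_le_sqrt hab
  rcases (Real.sqrt_nonneg b).eq_or_lt with hb | hb
  · rw [← hb, div_zero]
    linarith [Real.sqrt_nonneg a]
  · rw [div_le_iff₀ hb]
    nlinarith [Real.sq_sqrt ha, Real.sq_sqrt (ha.trans hab), sq_nonneg (√b - √a)]

theorem sqrt_le_div_add {x β : ℝ} (hx : 0 ≤ x) (hβ : 0 < β) : √x ≤ x / β + β := by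
  rw [div_add' _ _ _ hβ.ne', le_div_iff₀ hβ]
  nlinarith [Real.sq_sqrt hx, sq_nonneg (√x - β), Real.sqrt_nonneg x]

theorem div_sqrt_le_sqrt_mul_div_sqrt {z a b ξ : ℝ} (hz : 0 ≤ z) (hb : 0 < b) (hξ : 0 ≤ ξ)
    (hba : b ≤ ξ * a) : z / √a ≤ √ξ * (z / √b) := by
  have ha : 0 < a := pos_of_mul_pos_right (hb.trans_le hba) hξ
  have hsqrt : √b ≤ √ξ * √a := by
    rw [← Real.sqrt_mul hξ]
    exact Real.sqrt_le_sqrt hba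
  rw [mul_div_assoc', div_le_div_iff₀ (Real.sqrt_pos.2 ha) (Real.sqrt_pos.2 hb)]
  nlinarith [mul_le_mul_of_nonneg_left hsqrt hz]

theorem antitone_mul_le_sum_mul_sub {H Q : ℕ → ℝ} (hH : Antitone H) (hQ0 : Q 0 = 0) :
    ∀ T, (∀ t < T, 0 ≤ Q t) → H T * Q T ≤ ∑ t ∈ Icc 1 T, H t * (Q t - Q (t - 1))
  | 0, _ => by simp [hQ0]
  | T + 1, hQ => by
    have ih := antitone_mul_le_sum_mul_sub hH hQ0 T fun t ht => hQ t (by omega)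
    rw [sum_Icc_succ_top (by omega), Nat.add_sub_cancel]
    nlinarith [mul_le_mul_of_nonneg_right (hH T.le_succ) (hQ T T.lt_succ_self)]

section Admissible

variable {β : ℕ → ℝ} {T : ℕ}

theorem sum_mul_sqrt_sub_le {H S : ℕ → ℝ} (hH : Antitone H) (hHnonneg : ∀ t ∈ Icc 1 T, 0 ≤ H t)
    (hS0 : S 0 = 0) (hS : ∀ t ≤ T, 0 ≤ S t) (hβ0 : β 0 = 0) (hβpos : ∀ t ∈ Icc 1 T, 0 < β t)
    (hβmono : ∀ t ∈ Icc 1 T, β (t - 1) ≤ β t) :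
    ∑ t ∈ Icc 1 T, H t * (√(S t) - √(S (t - 1)))
      ≤ ∑ t ∈ Icc 1 T, (H t * (S t - S (t - 1)) / β t + (β t - β (t - 1)) * H t) := by
  set R : ℕ → ℝ := fun t => S t / β t - √(S t) + β t with hR
  have hR0 : R 0 = 0 := by simp [hR, hS0, hβ0]
  have hRnonneg : ∀ t ≤ T, 0 ≤ R t := by
    intro t ht
    rcases Nat.eq_zero_or_pos t with rfl | ht0
    · exact hR0.ge
    · linarith [sqrt_le_div_add (hS t ht) (hβpos t (mem_Icc.2 ⟨ht0, ht⟩))]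
  have hpotential : 0 ≤ ∑ t ∈ Icc 1 T, H t * (R t - R (t - 1)) := by
    refine (le_trans ?_ (antitone_mul_le_sum_mul_sub hH hR0 T fun t ht => hRnonneg t ht.le))
    rcases Nat.eq_zero_or_pos T with rfl | hT
    · simp [hR0]
    · exact mul_nonneg (hHnonneg T (mem_Icc.2 ⟨hT, le_rfl⟩)) (hRnonneg T le_rfl)
  have hterm : ∀ t ∈ Icc 1 T, H t * (√(S t) - √(S (t - 1))) + H t * (R t - R (t - 1))
      ≤ H t * (S t - S (t - 1)) / β t + (β t - β (t - 1)) * H t := by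
    intro t ht
    have hprev : S (t - 1) / β t ≤ S (t - 1) / β (t - 1) := by
      rcases (mem_Icc.1 ht).1.eq_or_lt with rfl | ht1
      · simp [hS0]
      · exact div_le_div_of_nonneg_left (hS _ (by grind)) (hβpos _ (by grind)) (hβmono t ht)
    have hsplit : H t * (S t - S (t - 1)) / β t = H t * (S t / β t - S (t - 1) / β t) := by ring
    rw [hsplit]
    nlinarith [mul_le_mul_of_nonneg_left hprev (hHnonneg t ht)]
  linarith [sum_le_sum hterm, sum_add_distrib (s := Icc 1 T)
    (f := fun t => H t * (√(S t) - √(S (t - 1)))) (g := fun t => H t * (R t - R (t - 1)))]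

variable {z : ℕ → ℝ}

theorem G_le_two_mul_F {H : ℕ → ℝ} (hH : Antitone H) (hHpos : ∀ t ∈ Icc 1 T, 0 < H t)
    (hz : ∀ t ∈ Icc 1 T, 0 ≤ z t) (hβ0 : β 0 = 0) (hβpos : ∀ t ∈ Icc 1 T, 0 < β t)
    (hβmono : ∀ t ∈ Icc 1 T, β (t - 1) ≤ β t) :
    G z H T ≤ 2 * F z H β T := by
  set S : ℕ → ℝ := fun t => ∑ s ∈ Icc 1 t, z s / H s with hS
  have hSnonneg : ∀ t ≤ T, 0 ≤ S t := fun t ht =>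
    sum_nonneg fun s hs => div_nonneg (hz s (by grind)) (hHpos s (by grind)).le
  have hincr : ∀ t ∈ Icc 1 T, S t - S (t - 1) = z t / H t := fun t ht => by
    simp only [hS, sum_Icc_one_eq_sum_Icc_one_pred_add _ (mem_Icc.1 ht).1, add_sub_cancel_left]
  have hz_eq : ∀ t ∈ Icc 1 T, z t = H t * (S t - S (t - 1)) := fun t ht => by
    rw [hincr t ht, mul_div_cancel₀ _ (hHpos t ht).ne']
  calc G z H T = ∑ t ∈ Icc 1 T, H t * ((S t - S (t - 1)) / √(S t)) := by
        refine sum_congr rfl fun t ht => ?_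
        rw [mul_div_assoc', ← hz_eq t ht]
    _ ≤ ∑ t ∈ Icc 1 T, H t * (2 * (√(S t) - √(S (t - 1)))) := by
        refine sum_le_sum fun t ht => mul_le_mul_of_nonneg_left ?_ (hHpos t ht).le
        refine sub_div_sqrt_le_two_mul_sqrt_sub (hSnonneg _ (by grind)) ?_
        linarith [hincr t ht, div_nonneg (hz t ht) (hHpos t ht).le]
    _ = 2 * ∑ t ∈ Icc 1 T, H t * (√(S t) - √(S (t - 1))) := by
        rw [mul_sum]
        exact sum_congr rfl fun t _ => by ring
    _ ≤ 2 * F z H β T := by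
        gcongr
        refine (sum_mul_sqrt_sub_le hH (fun t ht => (hHpos t ht).le) (by simp [hS]) hSnonneg hβ0
          hβpos hβmono).trans_eq (sum_congr rfl fun t ht => ?_)
        rw [← hz_eq t ht]

theorem G_le_sqrt_mul_G {h H : ℕ → ℝ} {ξ : ℝ} (hξ : 0 ≤ ξ) (hz : ∀ t ∈ Icc 1 T, 0 ≤ z t)
    (hh : ∀ t ∈ Icc 1 T, 0 < h t) (hH : ∀ t ∈ Icc 1 T, 0 < H t)
    (hhH : ∀ t ∈ Icc 1 T, h t ≤ ξ * H t) :
    G z h T ≤ √ξ * G z H T := by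
  rw [G, G, mul_sum]
  refine sum_le_sum fun t ht => ?_
  rcases (hz t ht).eq_or_lt with hzt | hzt
  · simp [← hzt]
  have hsub : Icc 1 t ⊆ Icc 1 T := Icc_subset_Icc le_rfl (mem_Icc.1 ht).2
  refine div_sqrt_le_sqrt_mul_div_sqrt hzt.le ?_ hξ ?_
  · refine lt_of_lt_of_le (div_pos hzt (hH t ht)) (single_le_sum (f := fun s => z s / H s)
      (fun s hs => div_nonneg (hz s (hsub hs)) (hH s (hsub hs)).le) (by grind))
  · rw [mul_sum]
    refine sum_le_sum fun s hs => ?_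
    have hs' := hsub hs
    rw [mul_div_assoc', div_le_div_iff₀ (hH s hs') (hh s hs')]
    nlinarith [mul_le_mul_of_nonneg_left (hhH s hs') (hz s hs')]

theorem F_mono {h H : ℕ → ℝ} (hHh : ∀ t ∈ Icc 1 T, H t ≤ h t)
    (hβmono : ∀ t ∈ Icc 1 T, β (t - 1) ≤ β t) :
    F z H β T ≤ F z h β T :=
  sum_le_sum fun t ht =>
    add_le_add_right (mul_le_mul_of_nonneg_left (hHh t ht) (sub_nonneg.2 (hβmono t ht))) _

end Admissible

end ApproxNonincreasing

open ApproxNonincreasing in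
theorem stmt19_general (T : ℕ) (ξ : ℝ) (hξ : 1 ≤ ξ)
    (z h : ℕ → ℝ)
    (hz : ∀ t, 1 ≤ t → t ≤ T → 0 ≤ z t)
    (hh : ∀ t, 1 ≤ t → t ≤ T → 0 < h t)
    (happrox : ∀ t' t, 1 ≤ t' → t' < t → t ≤ T → h t ≤ ξ * h t') :
    (∑ t ∈ Finset.Icc 1 T, z t / Real.sqrt (∑ s ∈ Finset.Icc 1 t, z s / h s))
      ≤ 2 * Real.sqrt ξ *
        sInf {y : ℝ | ∃ β : ℕ → ℝ, β 0 = 0 ∧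
          (∀ t, 1 ≤ t → t ≤ T → 0 < β t) ∧
          (∀ t, 1 ≤ t → t < T → β t ≤ β (t + 1)) ∧
          y = ∑ t ∈ Finset.Icc 1 T, (z t / β t + (β t - β (t - 1)) * h t)} := by
  have hz' : ∀ t ∈ Icc 1 T, 0 ≤ z t := fun t ht => hz t (mem_Icc.1 ht).1 (mem_Icc.1 ht).2
  have hh' : ∀ t ∈ Icc 1 T, 0 < h t := fun t ht => hh t (mem_Icc.1 ht).1 (mem_Icc.1 ht).2
  have hHpos := runningMin_pos h hh'
  have hpos : 0 < 2 * √ξ := by positivity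
  rw [← div_le_iff₀' hpos]
  refine le_csInf ⟨_, fun t => t, by simp, fun t ht _ => Nat.cast_pos.2 ht,
    fun t _ _ => Nat.cast_le.2 t.le_succ, rfl⟩ ?_
  rintro _ ⟨β, hβ0, hβpos, hβstep, rfl⟩
  have hβpos' : ∀ t ∈ Icc 1 T, 0 < β t := fun t ht => hβpos t (mem_Icc.1 ht).1 (mem_Icc.1 ht).2
  have hβmono : ∀ t ∈ Icc 1 T, β (t - 1) ≤ β t := fun t ht => by
    rcases (mem_Icc.1 ht).1.eq_or_lt with rfl | ht1
    · exact hβ0 ▸ (hβpos' 1 ht).le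
    · simpa [Nat.sub_add_cancel ht1.le] using hβstep (t - 1) (by omega) (by grind)
  rw [div_le_iff₀' hpos]
  calc G z h T ≤ √ξ * G z (runningMin h) T := G_le_sqrt_mul_G (by linarith) hz' hh' hHpos
        (le_mul_runningMin h hh' hξ happrox)
    _ ≤ √ξ * (2 * F z (runningMin h) β T) := by
        gcongr
        exact G_le_two_mul_F (runningMin_antitone h) hHpos hz' hβ0 hβpos' hβmono
    _ ≤ √ξ * (2 * F z h β T) := by
        gcongr
        exact F_mono (fun t ht => runningMin_le h (mem_Icc.1 ht).1) hβmono
    _ = 2 * √ξ * F z h β T := by ring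

/-- For ξ-approximately non-increasing `h`, one has `G(z,h) ≤ 2 √ξ F*(z,h)`. -/
theorem stmt19 (T : ℕ) (α ξ : ℝ) (hα : α ∈ Set.Ioo (0 : ℝ) 1) (hξ : 1 ≤ ξ)
    (z h : ℕ → ℝ)
    (hz : ∀ t, 1 ≤ t → t ≤ T → 0 ≤ z t)
    (hh : ∀ t, 1 ≤ t → t ≤ T → 0 < h t)
    (happrox : ∀ t' t, 1 ≤ t' → t' < t → t ≤ T → h t ≤ ξ * h t') :
    (∑ t ∈ Finset.Icc 1 T, z t / Real.sqrt (∑ s ∈ Finset.Icc 1 t, z s / h s))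
      ≤ 2 * Real.sqrt ξ *
        sInf {y : ℝ | ∃ β : ℕ → ℝ, β 0 = 0 ∧
          (∀ t, 1 ≤ t → t ≤ T → 0 < β t) ∧
          (∀ t, 1 ≤ t → t < T → β t ≤ β (t + 1)) ∧
          y = ∑ t ∈ Finset.Icc 1 T, (z t / β t + (β t - β (t - 1)) * h t)} :=
  stmt19_general T ξ hξ z h hz hh happrox
end
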